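/- arXiv:2506.12155 — 2 statements merged into one kernel-verified Lean document; each statement's English description precedes it below -/
import Mathlib

section
/- For every finite set Σ with |Σ| ≥ 2, every m ∈ ℕ, every full-support distributions μ_1,…,μ_m on Σ, and every ε, τ > 0 and d ∈ ℕ, there exists a function 𝓜 : ℕ → ℕ such that the following holds for all n, all functions f_1,…,f_m : Σ^n → [0,1], and every J_0 ⊆ [n]: there exists a set J ⊇ J_0 of size at most 𝓜(|J_0|) such that for all j ∈ [m], Pr_{x ~ μ_j^J}[ f_j|_{J←x} is (d,τ)-regular with respect to μ_j ] ≥ 1 − ε. -/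
open Finset

attribute [local instance 10] Classical.propDecidable

noncomputable section

variable {Alph : Type*} [Fintype Alph] [DecidableEq Alph]

/-- The conditional expectation `E[f | x_T]`: average the coordinates outside `T`
i.i.d. according to `μ`, keeping the coordinates in `T` fixed to those of `x`. -/
def condExpOn {n : ℕ} (μ : Alph → ℝ) (T : Finset (Fin n)) (f : (Fin n → Alph) → ℝ)
    (x : Fin n → Alph) : ℝ :=
  ∑ y : Fin n → Alph,
    (∏ i, if i ∈ T then (if y i = x i then (1 : ℝ) else 0) else μ (y i)) * f y

/-- The Efron–Stein component `f_S` of `f` with respect to `μ^n`, given by the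
inclusion–exclusion formula `f_S = Σ_{T ⊆ S} (−1)^{|S∖T|} E[f | x_T]`. -/
def esComp {n : ℕ} (μ : Alph → ℝ) (S : Finset (Fin n)) (f : (Fin n → Alph) → ℝ)
    (x : Fin n → Alph) : ℝ :=
  ∑ T ∈ S.powerset, (-1 : ℝ) ^ (S.card - T.card) * condExpOn μ T f x

/-- `‖f_S‖²`, computed in `L²(μ^n)`. -/
def esNormSq {n : ℕ} (μ : Alph → ℝ) (S : Finset (Fin n)) (f : (Fin n → Alph) → ℝ) : ℝ :=
  ∑ x : Fin n → Alph, (∏ i, μ (x i)) * (esComp μ S f x) ^ 2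

/-- Merge `x : Alph^J` with `y` off `J`: the restricted function `f|_{J←x}` is
represented as `fun y => f (mergeJ J x y)`. -/
def mergeJ {n : ℕ} (J : Finset (Fin n)) (x : ↥J → Alph) (y : Fin n → Alph) : Fin n → Alph :=
  fun i => if h : i ∈ J then x ⟨i, h⟩ else y i

/-- The degree-`d` influence `Inf_i[f^{≤d}] = Σ_{|S| ≤ d, i ∈ S} ‖f_S‖²`. -/
def degInfES {n : ℕ} (μ : Alph → ℝ) (d : ℕ) (f : (Fin n → Alph) → ℝ) (i : Fin n) : ℝ :=
  ∑ S : Finset (Fin n), if S.card ≤ d ∧ i ∈ S then esNormSq μ S f else 0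

/-- `f` is `(d,τ)`-regular with respect to `μ`. -/
def IsDegRegularES {n : ℕ} (μ : Alph → ℝ) (d : ℕ) (τ : ℝ) (f : (Fin n → Alph) → ℝ) : Prop :=
  ∀ i, degInfES μ d f i ≤ τ

/-!
Energy increment. For a set `J` of coordinates, let `Φ(J)` average, over the values `x` of the
coordinates in `J`, the potential `ψ(f|_{J←x}) = ∑_S (d + 1 - |S|)₊ ‖(f|_{J←x})_S‖²`. By Parseval,
`0 ≤ Φ ≤ d + 1` for `[0,1]`-valued `f`, and `Φ` is monotone in `J`, because fixing one more
coordinate `i` raises `ψ` on average by at least `Inf_i[f^{≤d}]`. Hence, if more than an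
`ε`-fraction of the restrictions `f|_{J←x}` are not `(d,τ)`-regular, adding one influential
coordinate for each bad `x` (at most `|Σ|^|J|` coordinates) raises `Φ` by at least `ετ`. Summing
`Φ` over the `m` functions, the process stops after `m(d + 1)/(ετ)` rounds, so `|J|` is bounded by
an iterate of `k ↦ k + |Σ|^k`.
-/

open Finset Function

theorem Finset.sum_powerset_sum_powerset_neg_one_pow {β : Type*} [DecidableEq β] (T : Finset β)
    (h : Finset β → ℝ) :
    ∑ S ∈ T.powerset, ∑ U ∈ S.powerset, (-1 : ℝ) ^ (#S - #U) * h U = h T := by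
  rw [sum_comm' (t' := T.powerset) (s' := fun U => Icc U T) fun S U => by
    simp only [mem_powerset, mem_Icc]
    exact ⟨fun h => ⟨⟨h.2, h.1⟩, h.2.trans h.1⟩, fun h => ⟨h.1.2, h.1.1⟩⟩]
  have hsign : ∀ U ∈ T.powerset, ∑ S ∈ Icc U T, (-1 : ℝ) ^ (#S - #U) * h U =
      if U = T then h U else 0 := fun U hU => by
    rw [mem_powerset] at hU
    rw [← sum_mul, Icc_eq_image_powerset hU, sum_image fun V hV W hW hVW => ?_]
    · have hcard : ∀ V ∈ (T \ U).powerset, #(U ∪ V) - #U = #V := fun V hV => by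
        rw [card_union_of_disjoint (disjoint_of_subset_right (mem_powerset.1 hV) disjoint_sdiff)]
        omega
      rw [sum_congr rfl fun V hV => by rw [hcard V hV]]
      have := congrArg (Int.cast : ℤ → ℝ) (sum_powerset_neg_one_pow_card (x := T \ U))
      push_cast at this
      have hUT : U = T ↔ T \ U = ∅ := by
        rw [sdiff_eq_empty_iff_subset]; exact ⟨fun h => h.ge, hU.antisymm⟩
      simp [this, hUT]
    · have hd : ∀ V ∈ ((T \ U).powerset : Set (Finset β)), Disjoint U V := fun V hV =>
        disjoint_of_subset_right (mem_powerset.1 hV) disjoint_sdiff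
      rw [← union_sdiff_cancel_left (hd V hV), ← union_sdiff_cancel_left (hd W hW)]
      exact congrArg (· \ U) hVW
  rw [sum_congr rfl hsign, sum_ite_eq' _ _ h, if_pos (mem_powerset_self T)]

theorem Finset.sum_eq_sum_powerset_erase {β M : Type*} [Fintype β] [DecidableEq β]
    [AddCommMonoid M] (i : β) (f : Finset β → M) :
    ∑ S, f S = ∑ S ∈ (univ.erase i).powerset, (f S + f (insert i S)) := by
  rw [sum_add_distrib, ← sum_powerset_insert (notMem_erase i univ), insert_erase (mem_univ i),
    powerset_univ]

theorem exists_superset_of_energy_increment {β : Type*} (P : Finset β → Prop)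
    (Φ : Finset β → ℝ) {g : ℕ → ℕ} (hg : Monotone g) (hg_le : ∀ k, k ≤ g k) {δ B : ℝ}
    (hΦ0 : ∀ J, 0 ≤ Φ J) (hΦB : ∀ J, Φ J ≤ B)
    (hstep : ∀ J, ¬P J → ∃ J', J ⊆ J' ∧ #J' ≤ g #J ∧ Φ J + δ ≤ Φ J') {T : ℕ} (hT : B < δ * T)
    (J₀ : Finset β) : ∃ J, J₀ ⊆ J ∧ #J ≤ g^[T] #J₀ ∧ P J := by
  have hround : ∀ t : ℕ, ∃ J, J₀ ⊆ J ∧ #J ≤ g^[t] #J₀ ∧ (P J ∨ δ * t ≤ Φ J) := by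
    intro t
    induction t with
    | zero => exact ⟨J₀, subset_rfl, le_rfl, Or.inr (by simpa using hΦ0 J₀)⟩
    | succ t ih =>
      obtain ⟨J, hJ₀, hJ, hPJ⟩ := ih
      rw [iterate_succ_apply']
      by_cases hP : P J
      · exact ⟨J, hJ₀, hJ.trans (hg_le _), Or.inl hP⟩
      obtain ⟨J', hJJ', hJ', hΦJ'⟩ := hstep J hP
      refine ⟨J', hJ₀.trans hJJ', hJ'.trans (hg hJ), Or.inr ?_⟩
      push_cast
      linarith [hPJ.resolve_left hP]
  obtain ⟨J, hJ₀, hJ, hPJ⟩ := hround T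
  exact ⟨J, hJ₀, hJ, hPJ.resolve_right fun h => (hT.trans_le h).not_ge (hΦB J)⟩

section PiExpect

variable {ι α : Type*} [Fintype ι] [DecidableEq ι] {μ : α → ℝ}

theorem prod_update_mul (x : ι → α) (i : ι) (a : α) :
    (∏ j, μ (update x i a j)) * μ (x i) = (∏ j, μ (x j)) * μ a := by
  rw [← mul_prod_erase univ _ (mem_univ i), ← mul_prod_erase univ (fun j => μ (x j)) (mem_univ i),
    update_self, prod_congr rfl fun j hj => by rw [update_of_ne (ne_of_mem_erase hj)]]
  ring

variable [Fintype α]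

variable (μ) in
def piExpect (F : (ι → α) → ℝ) : ℝ :=
  ∑ x, (∏ i, μ (x i)) * F x

theorem piExpect_const (hμ : ∑ a, μ a = 1) (c : ℝ) : piExpect μ (fun _ : ι → α => c) = c := by
  rw [piExpect, ← sum_mul, ← Fintype.prod_sum, hμ, prod_const_one, one_mul]

theorem piExpect_add (F G : (ι → α) → ℝ) :
    piExpect μ (fun x => F x + G x) = piExpect μ F + piExpect μ G := by
  simp only [piExpect, mul_add, sum_add_distrib]

theorem piExpect_sub (F G : (ι → α) → ℝ) :
    piExpect μ (fun x => F x - G x) = piExpect μ F - piExpect μ G := by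
  simp only [piExpect, mul_sub, sum_sub_distrib]

theorem piExpect_mul_left (c : ℝ) (F : (ι → α) → ℝ) :
    piExpect μ (fun x => c * F x) = c * piExpect μ F := by
  simp only [piExpect, mul_sum, mul_left_comm]

theorem piExpect_sum {κ : Type*} (s : Finset κ) (F : κ → (ι → α) → ℝ) :
    piExpect μ (fun x => ∑ k ∈ s, F k x) = ∑ k ∈ s, piExpect μ (F k) := by
  simp only [piExpect, mul_sum]
  exact sum_comm

theorem piExpect_comm {κ : Type*} [Fintype κ] [DecidableEq κ] (F : (ι → α) → (κ → α) → ℝ) :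
    piExpect μ (fun x => piExpect μ (F x)) = piExpect μ (fun z => piExpect μ (fun x => F x z)) := by
  simp only [piExpect, mul_sum]
  rw [sum_comm]
  simp only [mul_left_comm]

theorem piExpect_mono (hμ : ∀ a, 0 ≤ μ a) {F G : (ι → α) → ℝ} (h : ∀ x, F x ≤ G x) :
    piExpect μ F ≤ piExpect μ G :=
  sum_le_sum fun x _ => mul_le_mul_of_nonneg_left (h x) (prod_nonneg fun _ _ => hμ _)

theorem piExpect_nonneg (hμ : ∀ a, 0 ≤ μ a) {F : (ι → α) → ℝ} (h : ∀ x, 0 ≤ F x) :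
    0 ≤ piExpect μ F :=
  sum_nonneg fun x _ => mul_nonneg (prod_nonneg fun _ _ => hμ _) (h x)

/-- The change of variables is the involution `(x, a) ↦ (update x i a, x i)`. -/
theorem piExpect_eq_piExpect_update (hμ : ∑ a, μ a = 1) (F : (ι → α) → ℝ) (i : ι) :
    piExpect μ F = piExpect μ (fun x => ∑ a, μ a * F (update x i a)) := by
  have hσ : Involutive fun p : (ι → α) × α => (update p.1 i p.2, p.1 i) := fun p => by simp
  calc piExpect μ F = ∑ p : (ι → α) × α, (∏ j, μ (p.1 j)) * μ p.2 * F p.1 := by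
        simp only [piExpect, Fintype.sum_prod_type, mul_right_comm _ (μ _), ← mul_sum, hμ, mul_one]
    _ = ∑ p : (ι → α) × α, (∏ j, μ (update p.1 i p.2 j)) * μ (p.1 i) * F (update p.1 i p.2) :=
        (hσ.bijective.sum_comp fun p => (∏ j, μ (p.1 j)) * μ p.2 * F p.1).symm
    _ = _ := by
        simp only [prod_update_mul, Fintype.sum_prod_type, piExpect, mul_sum]
        exact sum_congr rfl fun x _ => sum_congr rfl fun a _ => by ring

theorem piExpect_apply (hμ : ∑ a, μ a = 1) (F : α → ℝ) (i : ι) :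
    piExpect μ (fun x => F (x i)) = ∑ a, μ a * F a := by
  rw [piExpect_eq_piExpect_update hμ _ i]
  simp only [update_self]
  exact piExpect_const hμ _

theorem piExpect_piecewise (hμ : ∑ a, μ a = 1) (F : (ι → α) → ℝ) (K : Finset ι) :
    piExpect μ (fun x => piExpect μ (fun z => F (K.piecewise z x))) = piExpect μ F := by
  induction K using Finset.induction_on with
  | empty => simp only [piecewise_empty, piExpect_const hμ]
  | @insert i K hi ih =>
    have hpw : ∀ (x z : ι → α) (a : α), K.piecewise (update z i a) x = K.piecewise z x :=
      fun x z a => K.piecewise_congr (fun j hj => update_of_ne (ne_of_mem_of_not_mem hj hi) _ _)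
        fun _ _ => rfl
    have hins : ∀ x z : ι → α,
        (insert i K).piecewise z x = K.piecewise z (update x i (z i)) := fun x z => by
      ext j
      by_cases hj : j = i
      · subst hj; simp [hi]
      · by_cases hjK : j ∈ K <;> simp [hj, hjK]
    calc _ = piExpect μ (fun x =>
          piExpect μ (fun z => ∑ a, μ a * F (K.piecewise z (update x i a)))) := by
          congr! 2 with x
          simp only [hins]
          rw [piExpect_eq_piExpect_update hμ _ i]
          simp only [update_self, hpw]
      _ = piExpect μ (fun z => piExpect μ (fun x => F (K.piecewise z x))) := by
          rw [piExpect_comm]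
          congr! 2 with z
          exact (piExpect_eq_piExpect_update hμ (fun x => F (K.piecewise z x)) i).symm
      _ = piExpect μ F := by rw [← piExpect_comm, ih]

theorem piExpect_comp_restrict (hμ : ∑ a, μ a = 1) (s : Finset ι) (h : (s → α) → ℝ) :
    piExpect μ (fun x : ι → α => h fun i => x i) = piExpect μ h := by
  let e := Equiv.piEquivPiSubtypeProd (· ∈ s) fun _ => α
  have he : ∀ p i, e.symm p i = if h : i ∈ s then p.1 ⟨i, h⟩ else p.2 ⟨i, h⟩ := fun _ _ => rfl
  have hw : ∀ p, ∏ i, μ (e.symm p i) = (∏ i, μ (p.1 i)) * ∏ i, μ (p.2 i) := fun p => by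
    rw [← prod_mul_prod_compl s, ← prod_coe_sort s,
      prod_subtype sᶜ (p := (· ∉ s)) (fun _ => mem_compl)]
    congr 1 <;> exact prod_congr rfl fun i _ => by simp [he, i.2]
  have hv : ∑ v : {i // i ∉ s} → α, ∏ i, μ (v i) = 1 := by
    simpa [piExpect] using piExpect_const (ι := {i // i ∉ s}) hμ 1
  rw [piExpect, ← e.symm.sum_comp, Fintype.sum_prod_type]
  refine sum_congr rfl fun u _ => ?_
  simp only [hw, fun v (i : s) => show e.symm (u, v) i = u i by simp [he, i.2]]
  rw [← sum_mul, ← mul_sum, hv, mul_one]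

end PiExpect

section CondExp

variable {α : Type*} [Fintype α] [DecidableEq α] {n : ℕ} {μ : α → ℝ}

theorem condExpOn_eq_piExpect (hμ : ∑ a, μ a = 1) (T : Finset (Fin n)) (g : (Fin n → α) → ℝ)
    (x : Fin n → α) : condExpOn μ T g x = piExpect μ fun z => g (T.piecewise x z) := by
  have hfiber : ∀ y : Fin n → α,
      ∑ z : Fin n → α, (∏ i, μ (z i)) * (if T.piecewise x z = y then 1 else 0) =
        ∏ i, if i ∈ T then (if y i = x i then (1 : ℝ) else 0) else μ (y i) := fun y => by
    have hind : ∀ z : Fin n → α, (if T.piecewise x z = y then (1 : ℝ) else 0) =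
        ∏ i, if (if i ∈ T then x i else z i) = y i then 1 else 0 := fun z => by
      rw [Fintype.prod_boole]
      simp [funext_iff, Finset.piecewise]
    simp only [hind, ← prod_mul_distrib]
    rw [← Fintype.prod_sum (fun i a => μ a * if (if i ∈ T then x i else a) = y i then 1 else 0)]
    refine prod_congr rfl fun i _ => ?_
    by_cases hi : i ∈ T
    · simp [hi, hμ, eq_comm]
    · simp [hi]
  calc condExpOn μ T g x
      = ∑ y, (∑ z, (∏ i, μ (z i)) * (if T.piecewise x z = y then 1 else 0)) * g y := by
        simp only [hfiber, condExpOn]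
    _ = _ := by
        simp only [sum_mul, piExpect]
        rw [sum_comm]
        simp

theorem condExpOn_congr (T : Finset (Fin n)) (g : (Fin n → α) → ℝ) {x x' : Fin n → α}
    (h : ∀ i ∈ T, x i = x' i) : condExpOn μ T g x = condExpOn μ T g x' := by
  unfold condExpOn
  refine sum_congr rfl fun y _ => congrArg (· * g y) (prod_congr rfl fun i _ => ?_)
  by_cases hi : i ∈ T <;> simp [hi, h]

theorem condExpOn_sum (T : Finset (Fin n)) {κ : Type*} (s : Finset κ) (c : κ → ℝ)
    (F : κ → (Fin n → α) → ℝ) (x : Fin n → α) :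
    condExpOn μ T (fun y => ∑ k ∈ s, c k * F k y) x = ∑ k ∈ s, c k * condExpOn μ T (F k) x := by
  simp only [condExpOn, mul_sum]
  rw [sum_comm]
  simp only [mul_left_comm]

theorem condExpOn_univ (hμ : ∑ a, μ a = 1) (g : (Fin n → α) → ℝ) : condExpOn μ univ g = g :=
  funext fun x => by simp only [condExpOn_eq_piExpect hμ, piecewise_univ, piExpect_const hμ]

theorem condExpOn_condExpOn (hμ : ∑ a, μ a = 1) (T T' : Finset (Fin n)) (g : (Fin n → α) → ℝ) :
    condExpOn μ T (condExpOn μ T' g) = condExpOn μ (T ∩ T') g := funext fun x => by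
  have h : ∀ y z : Fin n → α,
      T'.piecewise (T.piecewise x y) z = (T ∩ T').piecewise x (T'.piecewise y z) := fun y z => by
    ext i
    by_cases hT : i ∈ T <;> by_cases hT' : i ∈ T' <;> simp [hT, hT']
  simp only [condExpOn_eq_piExpect hμ, h]
  rw [piExpect_comm]
  exact piExpect_piecewise hμ (fun z => g ((T ∩ T').piecewise x z)) T'

theorem condExpOn_comp_update (hμ : ∑ a, μ a = 1) {T : Finset (Fin n)} {i : Fin n} (hi : i ∉ T)
    (a : α) (g : (Fin n → α) → ℝ) (x : Fin n → α) :
    condExpOn μ T (fun y => g (update y i a)) x = condExpOn μ (insert i T) g (update x i a) := by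
  simp only [condExpOn_eq_piExpect hμ]
  congr! 3 with z
  ext j
  by_cases hj : j = i
  · subst hj; simp
  · by_cases hjT : j ∈ T <;> simp [hj, hjT]

theorem condExpOn_insert_of_update_eq (hμ : ∑ a, μ a = 1) {g : (Fin n → α) → ℝ} {i : Fin n}
    (hg : ∀ y b, g (update y i b) = g y) (T : Finset (Fin n)) :
    condExpOn μ (insert i T) g = condExpOn μ T g :=
  funext fun x => by simp only [condExpOn_eq_piExpect hμ, piecewise_insert, hg]

/-- Resample the coordinates outside `T`, on which `E_T v` does not depend. -/
theorem piExpect_mul_condExpOn (hμ : ∑ a, μ a = 1) (T : Finset (Fin n))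
    (u v : (Fin n → α) → ℝ) :
    piExpect μ (fun x => u x * condExpOn μ T v x) =
      piExpect μ (fun x => condExpOn μ T u x * condExpOn μ T v x) := by
  have hv : ∀ x z : Fin n → α, condExpOn μ T v (Tᶜ.piecewise z x) = condExpOn μ T v x :=
    fun x z => condExpOn_congr T v fun i hi => piecewise_eq_of_notMem _ _ _ (by simpa using hi)
  rw [← piExpect_piecewise hμ _ Tᶜ]
  simp only [hv, mul_comm _ (condExpOn μ T v _), piExpect_mul_left]
  simp only [condExpOn_eq_piExpect hμ T u, piecewise_compl]

theorem piExpect_condExpOn_mul (hμ : ∑ a, μ a = 1) (T : Finset (Fin n))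
    (u v : (Fin n → α) → ℝ) :
    piExpect μ (fun x => condExpOn μ T u x * v x) =
      piExpect μ (fun x => u x * condExpOn μ T v x) := by
  calc piExpect μ (fun x => condExpOn μ T u x * v x)
      = piExpect μ (fun x => v x * condExpOn μ T u x) := by simp only [mul_comm]
    _ = piExpect μ (fun x => condExpOn μ T u x * condExpOn μ T v x) := by
        rw [piExpect_mul_condExpOn hμ]; simp only [mul_comm]
    _ = _ := (piExpect_mul_condExpOn hμ T u v).symm

end CondExp

section EfronStein

variable {α : Type*} [Fintype α] [DecidableEq α] {n : ℕ} {μ : α → ℝ}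

theorem sum_esComp_powerset (T : Finset (Fin n)) (g : (Fin n → α) → ℝ) (x : Fin n → α) :
    ∑ S ∈ T.powerset, esComp μ S g x = condExpOn μ T g x :=
  sum_powerset_sum_powerset_neg_one_pow T fun U => condExpOn μ U g x

theorem sum_esComp (hμ : ∑ a, μ a = 1) (g : (Fin n → α) → ℝ) (x : Fin n → α) :
    ∑ S, esComp μ S g x = g x := by
  rw [← powerset_univ, sum_esComp_powerset, condExpOn_univ hμ]

theorem esComp_insert {S : Finset (Fin n)} {i : Fin n} (hi : i ∉ S) (g : (Fin n → α) → ℝ)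
    (x : Fin n → α) :
    esComp μ (insert i S) g x = ∑ U ∈ S.powerset,
      (-1 : ℝ) ^ (#S - #U) * (condExpOn μ (insert i U) g x - condExpOn μ U g x) := by
  simp only [mul_sub, sum_sub_distrib]
  rw [sub_eq_neg_add, ← sum_neg_distrib, esComp, sum_powerset_insert hi]
  congr 1 <;> refine sum_congr rfl fun U hU => ?_
  · have : #U ≤ #S := card_le_card (mem_powerset.1 hU)
    rw [card_insert_of_notMem hi, Nat.sub_add_comm this, pow_succ]
    ring
  · rw [card_insert_of_notMem hi,
      card_insert_of_notMem fun h => hi (mem_powerset.1 hU h), Nat.add_sub_add_right]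

theorem esComp_eq_zero_of_update_eq (hμ : ∑ a, μ a = 1) {g : (Fin n → α) → ℝ} {i : Fin n}
    (hg : ∀ y b, g (update y i b) = g y) {S : Finset (Fin n)} (hi : i ∈ S) : esComp μ S g = 0 :=
  funext fun x => by
    rw [← insert_erase hi, esComp_insert (notMem_erase i S)]
    simp [condExpOn_insert_of_update_eq hμ hg]

theorem condExpOn_esComp (hμ : ∑ a, μ a = 1) (T S : Finset (Fin n)) (g : (Fin n → α) → ℝ) :
    condExpOn μ T (esComp μ S g) = esComp μ S (condExpOn μ T g) := funext fun x => by
  unfold esComp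
  rw [condExpOn_sum]
  simp only [condExpOn_condExpOn hμ, inter_comm]

theorem condExpOn_esComp_of_subset (hμ : ∑ a, μ a = 1) {S T : Finset (Fin n)} (h : S ⊆ T)
    (g : (Fin n → α) → ℝ) : condExpOn μ T (esComp μ S g) = esComp μ S g := by
  rw [condExpOn_esComp hμ]
  funext x
  refine sum_congr rfl fun U hU => ?_
  rw [condExpOn_condExpOn hμ, inter_eq_left.2 ((mem_powerset.1 hU).trans h)]

theorem condExpOn_esComp_of_not_subset (hμ : ∑ a, μ a = 1) {S T : Finset (Fin n)} (h : ¬S ⊆ T)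
    (g : (Fin n → α) → ℝ) : condExpOn μ T (esComp μ S g) = 0 := by
  obtain ⟨i, hiS, hiT⟩ := not_subset.1 h
  rw [condExpOn_esComp hμ]
  refine esComp_eq_zero_of_update_eq hμ (fun y b => condExpOn_congr T g fun j hj => ?_) hiS
  exact update_of_ne (ne_of_mem_of_not_mem hj hiT) _ _

theorem piExpect_esComp_mul_esComp (hμ : ∑ a, μ a = 1) {S S' : Finset (Fin n)} (h : S ≠ S')
    (g g' : (Fin n → α) → ℝ) : piExpect μ (fun x => esComp μ S g x * esComp μ S' g' x) = 0 := by
  wlog hS' : ¬S' ⊆ S generalizing S S' g g'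
  · simp only [mul_comm (esComp μ S g _)]
    exact this h.symm g' g fun h' => h (h'.antisymm (not_not.1 hS'))
  calc piExpect μ (fun x => esComp μ S g x * esComp μ S' g' x)
      = piExpect μ (fun x => condExpOn μ S (esComp μ S g) x * esComp μ S' g' x) := by
        rw [condExpOn_esComp_of_subset hμ subset_rfl]
    _ = 0 := by
        rw [piExpect_condExpOn_mul hμ, condExpOn_esComp_of_not_subset hμ hS']
        simp [piExpect]

theorem esNormSq_eq_piExpect (S : Finset (Fin n)) (g : (Fin n → α) → ℝ) :
    esNormSq μ S g = piExpect μ fun x => esComp μ S g x ^ 2 := rfl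

theorem sum_esNormSq (hμ : ∑ a, μ a = 1) (g : (Fin n → α) → ℝ) :
    ∑ S, esNormSq μ S g = piExpect μ (fun x => g x ^ 2) := by
  have hsq : ∀ x, g x ^ 2 = ∑ S, ∑ S', esComp μ S g x * esComp μ S' g x := fun x => by
    rw [sq, ← sum_esComp hμ g x, sum_mul_sum]
  simp only [hsq, piExpect_sum]
  refine sum_congr rfl fun S _ => ?_
  rw [sum_eq_single S (fun S' _ h => piExpect_esComp_mul_esComp hμ (Ne.symm h) g g)
    (fun h => (h (mem_univ S)).elim)]
  rw [esNormSq_eq_piExpect]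
  simp only [sq]

theorem esNormSq_nonneg (hμ : ∀ a, 0 ≤ μ a) (S : Finset (Fin n)) (g : (Fin n → α) → ℝ) :
    0 ≤ esNormSq μ S g :=
  piExpect_nonneg hμ fun _ => sq_nonneg _

theorem degInfES_nonneg (hμ : ∀ a, 0 ≤ μ a) (d : ℕ) (g : (Fin n → α) → ℝ) (i : Fin n) :
    0 ≤ degInfES μ d g i :=
  sum_nonneg fun S _ => by split_ifs <;> simp [esNormSq_nonneg hμ]

theorem degInfES_eq_zero_of_update_eq (hμ : ∑ a, μ a = 1) (d : ℕ) {g : (Fin n → α) → ℝ}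
    {i : Fin n} (hg : ∀ y b, g (update y i b) = g y) : degInfES μ d g i = 0 :=
  sum_eq_zero fun S _ => by
    split_ifs with hS
    · simp [esNormSq, esComp_eq_zero_of_update_eq hμ hg hS.2]
    · rfl

theorem esComp_comp_update (hμ : ∑ a, μ a = 1) {S : Finset (Fin n)} {i : Fin n} (hi : i ∉ S)
    (a : α) (g : (Fin n → α) → ℝ) (x : Fin n → α) :
    esComp μ S (fun y => g (update y i a)) x =
      esComp μ S g (update x i a) + esComp μ (insert i S) g (update x i a) := by
  rw [esComp_insert hi, esComp, esComp, ← sum_add_distrib]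
  refine sum_congr rfl fun U hU => ?_
  rw [condExpOn_comp_update hμ fun h => hi (mem_powerset.1 hU h)]
  ring

/-- The cross term vanishes by orthogonality of `g_S` and `g_{S ∪ {i}}`. -/
theorem sum_mul_esNormSq_comp_update (hμ : ∑ a, μ a = 1) {S : Finset (Fin n)} {i : Fin n}
    (hi : i ∉ S) (g : (Fin n → α) → ℝ) :
    ∑ a, μ a * esNormSq μ S (fun y => g (update y i a)) =
      esNormSq μ S g + esNormSq μ (insert i S) g := by
  have hne : S ≠ insert i S := fun h => hi (h ▸ mem_insert_self i S)
  calc ∑ a, μ a * esNormSq μ S (fun y => g (update y i a))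
      = piExpect μ (fun x => ∑ a, μ a *
          (esComp μ S g (update x i a) + esComp μ (insert i S) g (update x i a)) ^ 2) := by
        simp only [esNormSq_eq_piExpect, esComp_comp_update hμ hi, ← piExpect_mul_left,
          ← piExpect_sum]
    _ = piExpect μ (fun x => esComp μ S g x ^ 2 + esComp μ (insert i S) g x ^ 2 +
          2 * (esComp μ S g x * esComp μ (insert i S) g x)) := by
        rw [← piExpect_eq_piExpect_update hμ
          (fun x => (esComp μ S g x + esComp μ (insert i S) g x) ^ 2)]
        congr! 2 with x
        ring
    _ = _ := by
        rw [piExpect_add, piExpect_add, piExpect_mul_left, piExpect_esComp_mul_esComp hμ hne]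
        simp [esNormSq_eq_piExpect]

theorem esNormSq_comp_update_of_mem (hμ : ∑ a, μ a = 1) {S : Finset (Fin n)} {i : Fin n}
    (hi : i ∈ S) (a : α) (g : (Fin n → α) → ℝ) :
    esNormSq μ S (fun y => g (update y i a)) = 0 := by
  have hg : ∀ y b, g (update (update y i b) i a) = g (update y i a) := fun y b => by simp
  simp [esNormSq, esComp_eq_zero_of_update_eq hμ (g := fun y => g (update y i a)) hg hi]

end EfronStein

section Potential

variable {α : Type*} [Fintype α] [DecidableEq α] {n : ℕ} {μ : α → ℝ}

variable (μ) in
/-- The weights `(d + 1 - |S|)₊` (truncated subtraction) grow by one when `S` loses an element,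
as long as `|S| ≤ d + 1`; this is what makes fixing a coordinate raise the potential by at least
its degree-`d` influence. -/
def lowDegPotential (d : ℕ) (g : (Fin n → α) → ℝ) : ℝ :=
  ∑ S, ((d + 1 - #S : ℕ) : ℝ) * esNormSq μ S g

theorem lowDegPotential_nonneg (hμ : ∀ a, 0 ≤ μ a) (d : ℕ) (g : (Fin n → α) → ℝ) :
    0 ≤ lowDegPotential μ d g :=
  sum_nonneg fun S _ => mul_nonneg (Nat.cast_nonneg _) (esNormSq_nonneg hμ S g)

theorem lowDegPotential_le (hμ : ∑ a, μ a = 1) (hμ0 : ∀ a, 0 ≤ μ a) (d : ℕ)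
    {g : (Fin n → α) → ℝ} (hg : ∀ x, 0 ≤ g x ∧ g x ≤ 1) : lowDegPotential μ d g ≤ d + 1 := by
  have hweight : ∀ S : Finset (Fin n), ((d + 1 - #S : ℕ) : ℝ) ≤ d + 1 := fun S => by
    exact_mod_cast Nat.sub_le (d + 1) #S
  calc lowDegPotential μ d g ≤ ∑ S, (d + 1) * esNormSq μ S g :=
        sum_le_sum fun S _ => mul_le_mul_of_nonneg_right (hweight S) (esNormSq_nonneg hμ0 S g)
    _ = (d + 1) * piExpect μ (fun x => g x ^ 2) := by rw [← mul_sum, sum_esNormSq hμ]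
    _ ≤ (d + 1) * 1 := by
        gcongr
        calc piExpect μ (fun x => g x ^ 2) ≤ piExpect μ (fun _ => 1) :=
              piExpect_mono hμ0 fun x => pow_le_one₀ (hg x).1 (hg x).2
          _ = 1 := piExpect_const hμ 1
    _ = d + 1 := mul_one _

theorem lowDegPotential_add_degInfES_le (hμ : ∑ a, μ a = 1) (hμ0 : ∀ a, 0 ≤ μ a) (d : ℕ)
    (g : (Fin n → α) → ℝ) (i : Fin n) :
    lowDegPotential μ d g + degInfES μ d g i ≤
      ∑ a, μ a * lowDegPotential μ d (fun y => g (update y i a)) := by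
  have hrhs : ∑ a, μ a * lowDegPotential μ d (fun y => g (update y i a)) =
      ∑ S, ((d + 1 - #S : ℕ) : ℝ) * ∑ a, μ a * esNormSq μ S (fun y => g (update y i a)) := by
    simp only [lowDegPotential, mul_sum]
    rw [sum_comm]
    simp only [mul_left_comm]
  rw [hrhs, lowDegPotential, degInfES, ← sum_add_distrib, sum_eq_sum_powerset_erase i,
    sum_eq_sum_powerset_erase i]
  refine sum_le_sum fun S hS => ?_
  have hi : i ∉ S := fun h => notMem_erase i univ (mem_powerset.1 hS h)
  have hN := esNormSq_nonneg hμ0 (insert i S) g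
  simp only [sum_mul_esNormSq_comp_update hμ hi,
    esNormSq_comp_update_of_mem hμ (mem_insert_self i S), mul_zero, sum_const_zero,
    card_insert_of_notMem hi, hi, and_false, if_false, mem_insert_self, and_true]
  split_ifs with hd
  · have hw : ((d + 1 - (#S + 1) : ℕ) : ℝ) + 1 = (d + 1 - #S : ℕ) := by
      exact_mod_cast (by omega : d + 1 - (#S + 1) + 1 = d + 1 - #S)
    nlinarith
  · have hw : ((d + 1 - (#S + 1) : ℕ) : ℝ) ≤ (d + 1 - #S : ℕ) := by
      exact_mod_cast (by omega : d + 1 - (#S + 1) ≤ d + 1 - #S)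
    nlinarith

variable (μ) in
def restrictPotential (d : ℕ) (f : (Fin n → α) → ℝ) (J : Finset (Fin n)) : ℝ :=
  piExpect μ fun x => lowDegPotential μ d fun y => f (J.piecewise x y)

theorem restrictPotential_empty (hμ : ∑ a, μ a = 1) (d : ℕ) (f : (Fin n → α) → ℝ) :
    restrictPotential μ d f ∅ = lowDegPotential μ d f := by
  simp only [restrictPotential, piecewise_empty, piExpect_const hμ]

theorem restrictPotential_singleton (hμ : ∑ a, μ a = 1) (d : ℕ) (f : (Fin n → α) → ℝ)
    (i : Fin n) :
    restrictPotential μ d f {i} = ∑ a, μ a * lowDegPotential μ d (fun y => f (update y i a)) := by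
  simp only [restrictPotential, piecewise_singleton]
  exact piExpect_apply hμ (fun a => lowDegPotential μ d fun y => f (update y i a)) i

theorem restrictPotential_union (hμ : ∑ a, μ a = 1) (d : ℕ) (f : (Fin n → α) → ℝ)
    {J K : Finset (Fin n)} (h : Disjoint J K) :
    restrictPotential μ d f (J ∪ K) =
      piExpect μ fun x => restrictPotential μ d (fun y => f (J.piecewise x y)) K := by
  have hpw : ∀ x z y : Fin n → α,
      J.piecewise x (K.piecewise z y) = (J ∪ K).piecewise (K.piecewise z x) y := fun x z y => by
    ext i
    by_cases hJ : i ∈ J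
    · simp [hJ, disjoint_left.1 h hJ]
    · by_cases hK : i ∈ K <;> simp [hJ, hK]
  simp only [restrictPotential, hpw]
  exact (piExpect_piecewise hμ (fun x => lowDegPotential μ d fun y => f ((J ∪ K).piecewise x y))
    K).symm

theorem lowDegPotential_le_restrictPotential (hμ : ∑ a, μ a = 1) (hμ0 : ∀ a, 0 ≤ μ a) (d : ℕ)
    (f : (Fin n → α) → ℝ) (K : Finset (Fin n)) :
    lowDegPotential μ d f ≤ restrictPotential μ d f K := by
  induction K using Finset.induction_on with
  | empty => rw [restrictPotential_empty hμ]
  | @insert i K hi ih =>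
    calc lowDegPotential μ d f ≤ restrictPotential μ d f K := ih
      _ ≤ restrictPotential μ d f (K ∪ {i}) := by
          rw [restrictPotential_union hμ d f (disjoint_singleton_right.2 hi)]
          refine piExpect_mono hμ0 fun x => ?_
          rw [restrictPotential_singleton hμ]
          exact le_of_add_le_of_nonneg_left (lowDegPotential_add_degInfES_le hμ hμ0 d _ i)
            (degInfES_nonneg hμ0 d _ i)
      _ = restrictPotential μ d f (insert i K) := by rw [union_comm, ← insert_eq]

theorem restrictPotential_mono (hμ : ∑ a, μ a = 1) (hμ0 : ∀ a, 0 ≤ μ a) (d : ℕ)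
    (f : (Fin n → α) → ℝ) {J K : Finset (Fin n)} (h : J ⊆ K) :
    restrictPotential μ d f J ≤ restrictPotential μ d f K := by
  rw [← union_sdiff_of_subset h, restrictPotential_union hμ d f disjoint_sdiff]
  exact piExpect_mono hμ0 fun x => lowDegPotential_le_restrictPotential hμ hμ0 d _ _

theorem lowDegPotential_add_degInfES_le_restrictPotential (hμ : ∑ a, μ a = 1)
    (hμ0 : ∀ a, 0 ≤ μ a) (d : ℕ) (f : (Fin n → α) → ℝ) {K : Finset (Fin n)} {i : Fin n}
    (hi : i ∈ K) : lowDegPotential μ d f + degInfES μ d f i ≤ restrictPotential μ d f K :=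
  calc lowDegPotential μ d f + degInfES μ d f i ≤ restrictPotential μ d f {i} := by
        rw [restrictPotential_singleton hμ]; exact lowDegPotential_add_degInfES_le hμ hμ0 d f i
    _ ≤ restrictPotential μ d f K := restrictPotential_mono hμ hμ0 d f (singleton_subset_iff.2 hi)

theorem restrictPotential_nonneg (hμ0 : ∀ a, 0 ≤ μ a) (d : ℕ) (f : (Fin n → α) → ℝ)
    (J : Finset (Fin n)) : 0 ≤ restrictPotential μ d f J :=
  piExpect_nonneg hμ0 fun _ => lowDegPotential_nonneg hμ0 d _

theorem restrictPotential_le (hμ : ∑ a, μ a = 1) (hμ0 : ∀ a, 0 ≤ μ a) (d : ℕ)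
    {f : (Fin n → α) → ℝ} (hf : ∀ x, 0 ≤ f x ∧ f x ≤ 1) (J : Finset (Fin n)) :
    restrictPotential μ d f J ≤ d + 1 :=
  (piExpect_mono hμ0 fun _ => lowDegPotential_le hμ hμ0 d fun _ => hf _).trans_eq
    (piExpect_const hμ _)

end Potential

section Regularity

theorem mergeJ_eq_piecewise {α : Type*} {n : ℕ} (J : Finset (Fin n)) (x y : Fin n → α) :
    mergeJ J (fun i : J => x i) y = J.piecewise x y := by
  ext i
  by_cases hi : i ∈ J <;> simp [mergeJ, hi]

variable {α : Type*} [Fintype α] [DecidableEq α] {n : ℕ} {μ : α → ℝ} {d : ℕ} {τ : ℝ}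

variable (μ d τ) in
def regularProb (f : (Fin n → α) → ℝ) (J : Finset (Fin n)) : ℝ :=
  piExpect μ fun x : J → α => if IsDegRegularES μ d τ (fun y => f (mergeJ J x y)) then 1 else 0

theorem exists_notMem_lt_degInfES (hμ : ∑ a, μ a = 1) (hτ : 0 ≤ τ) {f : (Fin n → α) → ℝ}
    {J : Finset (Fin n)} {x : J → α} (h : ¬IsDegRegularES μ d τ (fun y => f (mergeJ J x y))) :
    ∃ i ∉ J, τ < degInfES μ d (fun y => f (mergeJ J x y)) i := by
  simp only [IsDegRegularES, not_forall, not_le] at h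
  obtain ⟨i, hi⟩ := h
  refine ⟨i, fun hiJ => ?_, hi⟩
  have hfix : ∀ y b, mergeJ J x (update y i b) = mergeJ J x y := fun y b => by
    ext j
    by_cases hj : j ∈ J
    · simp [mergeJ, hj]
    · simp [mergeJ, hj, ne_of_mem_of_not_mem hiJ hj |>.symm]
  rw [degInfES_eq_zero_of_update_eq hμ d fun y b => by rw [hfix]] at hi
  linarith

theorem restrictPotential_add_le (hμ : ∑ a, μ a = 1) (hμ0 : ∀ a, 0 ≤ μ a)
    {f : (Fin n → α) → ℝ} {J K : Finset (Fin n)} (hJK : Disjoint J K)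
    (hK : ∀ x : J → α, ¬IsDegRegularES μ d τ (fun y => f (mergeJ J x y)) →
      ∃ i ∈ K, τ < degInfES μ d (fun y => f (mergeJ J x y)) i) :
    restrictPotential μ d f J + τ * (1 - regularProb μ d τ f J) ≤
      restrictPotential μ d f (J ∪ K) := by
  let r : (J → α) → ℝ := fun x =>
    if IsDegRegularES μ d τ (fun y => f (mergeJ J x y)) then 1 else 0
  have hpoint : ∀ x : Fin n → α,
      lowDegPotential μ d (fun y => f (J.piecewise x y)) + τ * (1 - r fun i => x i) ≤
        restrictPotential μ d (fun y => f (J.piecewise x y)) K := fun x => by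
    by_cases hreg : IsDegRegularES μ d τ (fun y => f (mergeJ J (fun i : J => x i) y))
    · simpa [r, hreg] using lowDegPotential_le_restrictPotential hμ hμ0 d _ K
    · obtain ⟨i, hiK, hi⟩ := hK _ hreg
      simp only [mergeJ_eq_piecewise] at hi
      have := lowDegPotential_add_degInfES_le_restrictPotential hμ hμ0 d
        (fun y => f (J.piecewise x y)) hiK
      simp only [r, hreg, if_false, sub_zero, mul_one]
      linarith
  calc restrictPotential μ d f J + τ * (1 - regularProb μ d τ f J)
      = piExpect μ fun x => lowDegPotential μ d (fun y => f (J.piecewise x y)) +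
          τ * (1 - r fun i => x i) := by
        rw [piExpect_add, piExpect_mul_left, piExpect_sub, piExpect_const hμ,
          piExpect_comp_restrict hμ J r]
        rfl
    _ ≤ piExpect μ fun x => restrictPotential μ d (fun y => f (J.piecewise x y)) K :=
        piExpect_mono hμ0 hpoint
    _ = restrictPotential μ d f (J ∪ K) := (restrictPotential_union hμ d f hJK).symm

theorem exists_restrictPotential_add_le (hμ : ∑ a, μ a = 1) (hμ0 : ∀ a, 0 ≤ μ a) (hτ : 0 ≤ τ)
    {ε : ℝ} {f : (Fin n → α) → ℝ} {J : Finset (Fin n)} (hJ : regularProb μ d τ f J < 1 - ε) :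
    ∃ K, Disjoint J K ∧ #K ≤ Fintype.card α ^ #J ∧
      restrictPotential μ d f J + ε * τ ≤ restrictPotential μ d f (J ∪ K) := by
  choose i hiJ hi using fun x : {x : J → α // ¬IsDegRegularES μ d τ fun y => f (mergeJ J x y)} =>
    exists_notMem_lt_degInfES hμ hτ x.2
  have hJK : Disjoint J (univ.image i) := disjoint_left.2 fun j hj hjK => by
    obtain ⟨x, -, rfl⟩ := mem_image.1 hjK
    exact hiJ x hj
  refine ⟨univ.image i, hJK, ?_, ?_⟩
  · calc #(univ.image i) ≤ Fintype.card {x : J → α // _} := card_image_le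
      _ ≤ Fintype.card (J → α) := Fintype.card_subtype_le _
      _ = Fintype.card α ^ #J := by simp
  · have := restrictPotential_add_le hμ hμ0 hJK fun x hx =>
      ⟨i ⟨x, hx⟩, mem_image_of_mem _ (mem_univ _), hi _⟩
    nlinarith

end Regularity

theorem exists_sum_restrictPotential_add_le {α : Type*} [Fintype α] [DecidableEq α] {n m d : ℕ}
    {μ : Fin m → α → ℝ} (hμ : ∀ j, ∑ a, μ j a = 1) (hμ0 : ∀ j a, 0 ≤ μ j a) {ε τ : ℝ}
    (hτ : 0 ≤ τ) {f : Fin m → (Fin n → α) → ℝ} {J : Finset (Fin n)}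
    (hJ : ¬∀ j, 1 - ε ≤ regularProb (μ j) d τ (f j) J) :
    ∃ J', J ⊆ J' ∧ #J' ≤ #J + Fintype.card α ^ #J ∧
      ∑ j, restrictPotential (μ j) d (f j) J + ε * τ ≤ ∑ j, restrictPotential (μ j) d (f j) J' := by
  simp only [not_forall, not_le] at hJ
  obtain ⟨j₀, hj₀⟩ := hJ
  obtain ⟨K, -, hK, hgain⟩ := exists_restrictPotential_add_le (hμ j₀) (hμ0 j₀) hτ hj₀
  refine ⟨J ∪ K, subset_union_left, (card_union_le J K).trans (by gcongr), ?_⟩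
  have hmono := sum_le_sum fun j (_ : j ∈ univ.erase j₀) =>
    restrictPotential_mono (hμ j) (hμ0 j) d (f j) (subset_union_left (s₁ := J) (s₂ := K))
  rw [← add_sum_erase _ _ (mem_univ j₀), ← add_sum_erase _ _ (mem_univ j₀)]
  linarith

/-- **Jones' regularity lemma** (junta version, arbitrary alphabets, `[0,1]`-valued
functions, low-degree influences). -/
theorem jones_regularity_lemma
    (Alph : Type*) [Fintype Alph] [DecidableEq Alph] (hcard : 2 ≤ Fintype.card Alph)
    (m : ℕ) (μ : Fin m → Alph → ℝ)
    (hpos : ∀ j a, 0 < μ j a) (hsum : ∀ j, ∑ a, μ j a = 1)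
    (ε τ : ℝ) (hε : 0 < ε) (hτ : 0 < τ) (d : ℕ) :
    ∃ 𝓜 : ℕ → ℕ, ∀ (n : ℕ) (f : Fin m → (Fin n → Alph) → ℝ),
      (∀ j x, 0 ≤ f j x ∧ f j x ≤ 1) →
      ∀ J₀ : Finset (Fin n), ∃ J : Finset (Fin n), J₀ ⊆ J ∧ J.card ≤ 𝓜 J₀.card ∧
        ∀ j, 1 - ε ≤ ∑ x : ↥J → Alph, (∏ i, μ j (x i)) *
          (if IsDegRegularES (μ j) d τ (fun y => f j (mergeJ J x y)) then 1 else 0) := by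
  have hμ0 : ∀ j a, 0 ≤ μ j a := fun j a => (hpos j a).le
  have hA : 0 < Fintype.card Alph := by omega
  obtain ⟨T, hT⟩ := exists_nat_gt (m * (d + 1) / (ε * τ))
  refine ⟨(fun k => k + Fintype.card Alph ^ k)^[T], fun n f hf J₀ => ?_⟩
  refine exists_superset_of_energy_increment (fun J => ∀ j, 1 - ε ≤ regularProb (μ j) d τ (f j) J)
    (fun J => ∑ j, restrictPotential (μ j) d (f j) J)
    (fun a b hab => add_le_add hab (Nat.pow_le_pow_right hA hab)) (fun k => le_add_right le_rfl)
    (fun J => sum_nonneg fun j _ => restrictPotential_nonneg (hμ0 j) d (f j) J)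
    (B := m * (d + 1)) (fun J => ?_) (δ := ε * τ)
    (fun J hJ => exists_sum_restrictPotential_add_le hsum hμ0 hτ.le hJ) ?_ J₀
  · calc ∑ j, restrictPotential (μ j) d (f j) J ≤ ∑ _j : Fin m, ((d : ℝ) + 1) :=
          sum_le_sum fun j _ => restrictPotential_le (hsum j) (hμ0 j) d (hf j) J
      _ = m * (d + 1) := by rw [sum_const, card_univ, Fintype.card_fin, nsmul_eq_mul]
  · rw [div_lt_iff₀ (by positivity)] at hT
    linarith
end
end

section
/- For every finite set Σ with |Σ| ≥ 2, every m ∈ ℕ, every full-support distributions μ_1,…,μ_m on Σ, every ρ ∈ (0,1), and every ε, τ > 0, there exists a function 𝓜 : ℕ → ℕ such that the following holds for all n, all functions f_1,…,f_m : Σ^n → [0,1], and every J_0 ⊆ [n]: there exists a set J ⊇ J_0 of size at most 𝓜(|J_0|) such that for all j ∈ [m], Pr_{x ~ μ_j^J}[ f_j|_{J←x} is (ρ,τ)-noisy-regular with respect to μ_j ] ≥ 1 − ε. -/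
open Finset

attribute [local instance 10] Classical.propDecidable

noncomputable section

variable {Alph : Type*} [Fintype Alph] [DecidableEq Alph]

/-- The `ρ`-noisy influence `Inf_i^ρ[f] = Σ_{S ∋ i} ρ^{|S|} ‖f_S‖²`. -/
def noisyInf {n : ℕ} (μ : Alph → ℝ) (ρ : ℝ) (f : (Fin n → Alph) → ℝ) (i : Fin n) : ℝ :=
  ∑ S : Finset (Fin n), if i ∈ S then ρ ^ S.card * esNormSq μ S f else 0

/-- `f` is `(ρ,τ)`-noisy-regular with respect to `μ`. -/
def IsNoisyRegular {n : ℕ} (μ : Alph → ℝ) (ρ τ : ℝ) (f : (Fin n → Alph) → ℝ) : Prop :=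
  ∀ i, noisyInf μ ρ f i ≤ τ


set_option linter.unusedSectionVars false
set_option maxHeartbeats 1000000
namespace JonesAux


def splitAt {n : ℕ} (i : Fin n) : (Fin n → Alph) ≃ Alph × ({k : Fin n // k ≠ i} → Alph) where
  toFun z := (z i, fun k => z k.1)
  invFun p := fun k => if h : k = i then p.1 else p.2 ⟨k, h⟩
  left_inv z := by
    funext k
    by_cases h : k = i
    · subst h; simp
    · simp [h]
  right_inv p := by
    refine Prod.ext (by simp) ?_
    funext k
    simp [k.2]

/-- extend `u` off `i` by value `a` at `i`. -/
def extI {n : ℕ} (i : Fin n) (a : Alph) (u : {k : Fin n // k ≠ i} → Alph) : Fin n → Alph :=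
  fun k => if h : k = i then a else u ⟨k, h⟩

@[simp] theorem extI_self {n : ℕ} (i : Fin n) (a : Alph) (u : {k : Fin n // k ≠ i} → Alph) :
    extI i a u i = a := by simp [extI]

theorem extI_ne {n : ℕ} {i k : Fin n} (h : k ≠ i) (a : Alph) (u : {k : Fin n // k ≠ i} → Alph) :
    extI i a u k = u ⟨k, h⟩ := by simp [extI, h]

theorem update_extI {n : ℕ} (i : Fin n) (a b : Alph) (u : {k : Fin n // k ≠ i} → Alph) :
    Function.update (extI i a u) i b = extI i b u := by
  funext k
  by_cases h : k = i
  · subst h; simp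
  · rw [Function.update_of_ne h, extI_ne h, extI_ne h]

theorem sum_split {n : ℕ} (i : Fin n) (F : (Fin n → Alph) → ℝ) :
    ∑ z : Fin n → Alph, F z
      = ∑ a : Alph, ∑ u : {k : Fin n // k ≠ i} → Alph, F (extI i a u) := by
  rw [← Equiv.sum_comp (splitAt i).symm F, Fintype.sum_prod_type]
  rfl

theorem prod_split {n : ℕ} (i : Fin n) (w : Fin n → ℝ) :
    (∏ k, w k) = w i * ∏ k : {k : Fin n // k ≠ i}, w k.1 := by
  rw [← Finset.prod_subtype (Finset.univ.erase i) (p := fun k : Fin n => k ≠ i)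
    (by simp [Finset.mem_erase])]
  rw [Finset.mul_prod_erase _ _ (Finset.mem_univ i)]

/-- master marginalization lemma -/
theorem marg {n : ℕ} (w : Fin n → Alph → ℝ) (i : Fin n) (F : (Fin n → Alph) → ℝ) :
    ∑ y : Fin n → Alph, (∏ j, w j (y j)) * F y
      = ∑ a : Alph, w i a * ∑ u : {k : Fin n // k ≠ i} → Alph,
          (∏ k : {k : Fin n // k ≠ i}, w k.1 (u k)) * F (extI i a u) := by
  rw [sum_split i]
  refine Finset.sum_congr rfl fun a _ => ?_
  rw [Finset.mul_sum]
  refine Finset.sum_congr rfl fun u _ => ?_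
  rw [prod_split i, extI_self, mul_assoc]
  congr 2
  exact Finset.prod_congr rfl fun k _ => by rw [extI_ne k.2]

/-- marginalization when the integrand does not depend on coordinate `i`. -/
theorem marg_indep {n : ℕ} (w : Fin n → Alph → ℝ) (i : Fin n) (F : (Fin n → Alph) → ℝ)
    (hw : ∑ a, w i a = 1) (hF : ∀ y a, F (Function.update y i a) = F y) (a₀ : Alph) :
    ∑ y : Fin n → Alph, (∏ j, w j (y j)) * F y
      = ∑ u : {k : Fin n // k ≠ i} → Alph,
          (∏ k : {k : Fin n // k ≠ i}, w k.1 (u k)) * F (extI i a₀ u) := by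
  rw [marg w i F]
  have h1 : ∀ a u, F (extI i a u) = F (extI i a₀ u) := by
    intro a u
    rw [← update_extI i a₀ a u, hF]
  calc ∑ a : Alph, w i a * ∑ u : {k : Fin n // k ≠ i} → Alph,
          (∏ k : {k : Fin n // k ≠ i}, w k.1 (u k)) * F (extI i a u)
      = ∑ a : Alph, w i a * ∑ u : {k : Fin n // k ≠ i} → Alph,
          (∏ k : {k : Fin n // k ≠ i}, w k.1 (u k)) * F (extI i a₀ u) := by
        refine Finset.sum_congr rfl fun a _ => ?_
        rw [Finset.sum_congr rfl fun u _ => by rw [h1 a u]]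
    _ = _ := by rw [← Finset.sum_mul, hw, one_mul]


end JonesAux
namespace JonesAux
variable {Alph : Type*} [Fintype Alph] [DecidableEq Alph]

theorem condExp_marg {n : ℕ} (μ : Alph → ℝ) (T : Finset (Fin n)) (i : Fin n)
    (f : (Fin n → Alph) → ℝ) (x : Fin n → Alph) :
    condExpOn μ T f x
      = ∑ a : Alph, (if i ∈ T then (if a = x i then (1:ℝ) else 0) else μ a) *
          ∑ u : {k : Fin n // k ≠ i} → Alph,
            (∏ k : {k : Fin n // k ≠ i},
              (if k.1 ∈ T then (if u k = x k.1 then (1:ℝ) else 0) else μ (u k))) * f (extI i a u) :=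
  marg (fun j a => if j ∈ T then (if a = x j then (1:ℝ) else 0) else μ a) i f

/-- C1: `condExpOn` does not depend on coordinates outside `T`. -/
theorem condExp_indep {n : ℕ} (μ : Alph → ℝ) {T : Finset (Fin n)} {i : Fin n} (hi : i ∉ T)
    (f : (Fin n → Alph) → ℝ) (x : Fin n → Alph) (a : Alph) :
    condExpOn μ T f (Function.update x i a) = condExpOn μ T f x := by
  unfold condExpOn
  refine Finset.sum_congr rfl fun y _ => ?_
  congr 1
  refine Finset.prod_congr rfl fun j _ => ?_
  by_cases hj : j ∈ T
  · have hji : j ≠ i := fun h => hi (h ▸ hj)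
    rw [if_pos hj, if_pos hj, Function.update_of_ne hji]
  · rw [if_neg hj, if_neg hj]

/-- C2: averaging a coordinate of `T` according to `μ`. -/
theorem condExp_avg {n : ℕ} (μ : Alph → ℝ) {T : Finset (Fin n)} {i : Fin n} (hi : i ∈ T)
    (f : (Fin n → Alph) → ℝ) (x : Fin n → Alph) :
    ∑ a : Alph, μ a * condExpOn μ T f (Function.update x i a)
      = condExpOn μ (T.erase i) f x := by
  have hW : ∀ (u : {k : Fin n // k ≠ i} → Alph) (b : Alph),
      (∏ k : {k : Fin n // k ≠ i},
        (if k.1 ∈ T then (if u k = Function.update x i b k.1 then (1:ℝ) else 0) else μ (u k)))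
      = ∏ k : {k : Fin n // k ≠ i},
        (if k.1 ∈ T.erase i then (if u k = x k.1 then (1:ℝ) else 0) else μ (u k)) := by
    intro u b
    refine Finset.prod_congr rfl fun k _ => ?_
    rw [Function.update_of_ne k.2]
    by_cases hk : k.1 ∈ T
    · rw [if_pos hk, if_pos (Finset.mem_erase.mpr ⟨k.2, hk⟩)]
    · rw [if_neg hk, if_neg (fun hc => hk (Finset.mem_of_mem_erase hc))]
  have hL : ∀ a : Alph, condExpOn μ T f (Function.update x i a)
      = ∑ u : {k : Fin n // k ≠ i} → Alph,
          (∏ k : {k : Fin n // k ≠ i},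
            (if k.1 ∈ T.erase i then (if u k = x k.1 then (1:ℝ) else 0) else μ (u k))) *
          f (extI i a u) := by
    intro a
    rw [condExp_marg μ T i f (Function.update x i a)]
    simp only [if_pos hi, Function.update_self]
    rw [Finset.sum_congr rfl (fun b _ => by rw [Finset.sum_congr rfl fun u _ => by rw [hW u a]])]
    simp [ite_mul, Finset.sum_ite_eq']
  rw [condExp_marg μ (T.erase i) i f x]
  refine Finset.sum_congr rfl fun a _ => ?_
  rw [hL a, if_neg (Finset.notMem_erase i T)]

/-- C3: conditioning on everything. -/
theorem condExp_univ {n : ℕ} (μ : Alph → ℝ) (f : (Fin n → Alph) → ℝ) (x : Fin n → Alph) :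
    condExpOn μ Finset.univ f x = f x := by
  unfold condExpOn
  have h1 : ∀ y : Fin n → Alph,
      (∏ i, if i ∈ Finset.univ then (if y i = x i then (1:ℝ) else 0) else μ (y i))
      = if y = x then 1 else 0 := by
    intro y
    simp only [Finset.mem_univ, if_true]
    rw [Finset.prod_boole]
    simp [funext_iff]
  rw [Finset.sum_congr rfl fun y _ => by rw [h1 y]]
  simp [ite_mul, Finset.sum_ite_eq']

/-- C4: a conditioning coordinate on which `f` does not depend can be dropped. -/
theorem condExp_dummy {n : ℕ} (μ : Alph → ℝ) (hsum1 : ∑ a, μ a = 1) [Nonempty Alph]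
    {T : Finset (Fin n)} {i : Fin n} (hi : i ∉ T)
    (f : (Fin n → Alph) → ℝ) (hf : ∀ y a, f (Function.update y i a) = f y)
    (x : Fin n → Alph) :
    condExpOn μ (insert i T) f x = condExpOn μ T f x := by
  obtain ⟨a₀⟩ := ‹Nonempty Alph›
  have hL := marg_indep
    (fun j a => if j ∈ insert i T then (if a = x j then (1:ℝ) else 0) else μ a) i f
    (by simp [Finset.mem_insert_self, Finset.sum_ite_eq']) hf a₀
  have hR := marg_indep
    (fun j a => if j ∈ T then (if a = x j then (1:ℝ) else 0) else μ a) i f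
    (by simp [hi, hsum1]) hf a₀
  show (∑ y : Fin n → Alph,
      (∏ j, (fun j a => if j ∈ insert i T then (if a = x j then (1:ℝ) else 0) else μ a) j (y j)) * f y)
    = ∑ y : Fin n → Alph,
      (∏ j, (fun j a => if j ∈ T then (if a = x j then (1:ℝ) else 0) else μ a) j (y j)) * f y
  rw [hL, hR]
  refine Finset.sum_congr rfl fun u _ => ?_
  congr 1
  refine Finset.prod_congr rfl fun k _ => ?_
  by_cases hk : k.1 ∈ T
  · rw [if_pos hk, if_pos (Finset.mem_insert_of_mem hk)]
  · rw [if_neg hk, if_neg (by simp [Finset.mem_insert, k.2, hk])]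

end JonesAux
namespace JonesAux
variable {Alph : Type*} [Fintype Alph] [DecidableEq Alph]

def pw (μ : Alph → ℝ) {n : ℕ} (z : Fin n → Alph) : ℝ := ∏ k, μ (z k)

theorem pw_nonneg {n : ℕ} {μ : Alph → ℝ} (hnn : ∀ a, 0 ≤ μ a) (z : Fin n → Alph) :
    0 ≤ pw μ z :=
  Finset.prod_nonneg fun k _ => hnn (z k)

theorem sum_pw {n : ℕ} {μ : Alph → ℝ} (hsum1 : ∑ a, μ a = 1) :
    ∑ z : Fin n → Alph, pw μ z = 1 := by
  have : (∏ _k : Fin n, ∑ a, μ a) = ∑ z : Fin n → Alph, ∏ k, μ (z k) :=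
    Finset.prod_univ_sum (fun _ => Finset.univ) fun _ a => μ a
  unfold pw
  rw [← this]
  simp [hsum1]

/-- E1 -/
theorem esComp_indep {n : ℕ} (μ : Alph → ℝ) {S : Finset (Fin n)} {i : Fin n} (hi : i ∉ S)
    (f : (Fin n → Alph) → ℝ) (x : Fin n → Alph) (a : Alph) :
    esComp μ S f (Function.update x i a) = esComp μ S f x := by
  unfold esComp
  refine Finset.sum_congr rfl fun T hT => ?_
  have hiT : i ∉ T := fun h => hi (Finset.mem_powerset.mp hT h)
  rw [condExp_indep μ hiT]

/-- E2 -/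
theorem esComp_avg_zero {n : ℕ} (μ : Alph → ℝ) (hsum1 : ∑ a, μ a = 1)
    {S : Finset (Fin n)} {i : Fin n} (hi : i ∈ S)
    (f : (Fin n → Alph) → ℝ) (x : Fin n → Alph) :
    ∑ a : Alph, μ a * esComp μ S f (Function.update x i a) = 0 := by
  obtain ⟨S', hi', rfl⟩ : ∃ S', i ∉ S' ∧ S = insert i S' :=
    ⟨S.erase i, S.notMem_erase i, (Finset.insert_erase hi).symm⟩
  unfold esComp
  simp only [Finset.mul_sum]
  rw [Finset.sum_comm]
  have hstep : ∀ T ∈ (insert i S').powerset,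
      (∑ a : Alph, μ a * ((-1:ℝ) ^ ((insert i S').card - T.card) * condExpOn μ T f (Function.update x i a)))
      = (-1:ℝ) ^ ((insert i S').card - T.card) *
          ∑ a : Alph, μ a * condExpOn μ T f (Function.update x i a) := by
    intro T _
    rw [Finset.mul_sum]
    exact Finset.sum_congr rfl fun a _ => by ring
  rw [Finset.sum_congr rfl hstep]
  rw [Finset.sum_powerset_insert hi']
  rw [← Finset.sum_add_distrib]
  refine Finset.sum_eq_zero fun T hT => ?_
  have hTS : T ⊆ S' := Finset.mem_powerset.mp hT
  have hiT : i ∉ T := fun h => hi' (hTS h)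
  have hTc : T.card ≤ S'.card := Finset.card_le_card hTS
  have h1 : ∑ a : Alph, μ a * condExpOn μ T f (Function.update x i a) = condExpOn μ T f x := by
    rw [Finset.sum_congr rfl fun a _ => by rw [condExp_indep μ hiT]]
    rw [← Finset.sum_mul, hsum1, one_mul]
  have h2 : ∑ a : Alph, μ a * condExpOn μ (insert i T) f (Function.update x i a)
      = condExpOn μ T f x := by
    rw [condExp_avg μ (Finset.mem_insert_self i T), Finset.erase_insert hiT]
  rw [h1, h2]
  have hc1 : (insert i S').card - T.card = (S'.card - T.card) + 1 := by
    rw [Finset.card_insert_of_notMem hi']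
    omega
  have hc2 : (insert i S').card - (insert i T).card = S'.card - T.card := by
    rw [Finset.card_insert_of_notMem hi', Finset.card_insert_of_notMem hiT]
    omega
  rw [hc1, hc2, pow_succ]
  ring

/-- E3 : a dummy coordinate inside `S` kills the component. -/
theorem esComp_dummy {n : ℕ} (μ : Alph → ℝ) (hsum1 : ∑ a, μ a = 1) [Nonempty Alph]
    {S : Finset (Fin n)} {i : Fin n} (hi : i ∈ S)
    (f : (Fin n → Alph) → ℝ) (hf : ∀ y a, f (Function.update y i a) = f y)
    (x : Fin n → Alph) :
    esComp μ S f x = 0 := by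
  obtain ⟨S', hi', rfl⟩ : ∃ S', i ∉ S' ∧ S = insert i S' :=
    ⟨S.erase i, S.notMem_erase i, (Finset.insert_erase hi).symm⟩
  unfold esComp
  rw [Finset.sum_powerset_insert hi']
  rw [← Finset.sum_add_distrib]
  refine Finset.sum_eq_zero fun T hT => ?_
  have hTS : T ⊆ S' := Finset.mem_powerset.mp hT
  have hiT : i ∉ T := fun h => hi' (hTS h)
  have hTc : T.card ≤ S'.card := Finset.card_le_card hTS
  rw [condExp_dummy μ hsum1 hiT f hf]
  have hc1 : (insert i S').card - T.card = (S'.card - T.card) + 1 := by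
    rw [Finset.card_insert_of_notMem hi']
    omega
  have hc2 : (insert i S').card - (insert i T).card = S'.card - T.card := by
    rw [Finset.card_insert_of_notMem hi', Finset.card_insert_of_notMem hiT]
    omega
  rw [hc1, hc2, pow_succ]
  ring

/-- real version of the alternating-sum identity -/
theorem sum_powerset_neg_one_pow_card_real {α : Type*} [DecidableEq α] (x : Finset α) :
    (∑ m ∈ x.powerset, (-1 : ℝ) ^ m.card) = if x = ∅ then 1 else 0 := by
  calc (∑ m ∈ x.powerset, (-1 : ℝ) ^ m.card)
      = ((∑ m ∈ x.powerset, (-1 : ℤ) ^ m.card : ℤ) : ℝ) := by push_cast; rfl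
    _ = _ := by rw [Finset.sum_powerset_neg_one_pow_card]; split <;> simp

/-- combinatorial collapse -/
theorem sum_superset_sign {n : ℕ} (T : Finset (Fin n)) :
    (∑ S : Finset (Fin n), if T ⊆ S then ((-1:ℝ)) ^ (S.card - T.card) else 0)
      = if T = Finset.univ then 1 else 0 := by
  rw [← Finset.sum_filter]
  rw [Finset.sum_nbij' (i := fun S => S \ T) (j := fun R => T ∪ R)
    (t := Tᶜ.powerset) (g := fun R => ((-1:ℝ)) ^ R.card)
    (by
      intro S hS
      simp only [Finset.mem_filter] at hS
      simp only [Finset.mem_powerset]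
      intro k hk
      simp only [Finset.mem_sdiff] at hk
      simp [Finset.mem_compl, hk.2])
    (by
      intro R hR
      simp only [Finset.mem_powerset] at hR
      simp only [Finset.mem_filter, Finset.mem_univ, true_and]
      exact Finset.subset_union_left)
    (by
      intro S hS
      simp only [Finset.mem_filter, Finset.mem_univ, true_and] at hS
      exact Finset.union_sdiff_of_subset hS)
    (by
      intro R hR
      simp only [Finset.mem_powerset] at hR
      apply Finset.union_sdiff_cancel_left
      rw [Finset.disjoint_left]
      intro k hkT hkR
      have := hR hkR
      simp [Finset.mem_compl] at this
      exact this hkT)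
    (by
      intro S hS
      simp only [Finset.mem_filter, Finset.mem_univ, true_and] at hS
      simp [Finset.card_sdiff_of_subset hS])]
  rw [sum_powerset_neg_one_pow_card_real]
  by_cases hT : T = Finset.univ
  · have : Tᶜ = ∅ := by simp [hT]
    simp [hT, this]
  · have : Tᶜ ≠ ∅ := by simpa [Finset.compl_eq_empty_iff] using hT
    simp [hT, this]

/-- E4: the components sum to `f`. -/
theorem sum_esComp {n : ℕ} (μ : Alph → ℝ) (f : (Fin n → Alph) → ℝ) (x : Fin n → Alph) :
    ∑ S : Finset (Fin n), esComp μ S f x = f x := by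
  unfold esComp
  have h1 : ∀ S : Finset (Fin n),
      (∑ T ∈ S.powerset, (-1:ℝ) ^ (S.card - T.card) * condExpOn μ T f x)
      = ∑ T : Finset (Fin n), if T ⊆ S then (-1:ℝ) ^ (S.card - T.card) * condExpOn μ T f x else 0 := by
    intro S
    rw [← Finset.sum_filter]
    apply Finset.sum_congr _ (fun T _ => rfl)
    ext T
    simp [Finset.mem_powerset]
  rw [Finset.sum_congr rfl fun S _ => h1 S]
  rw [Finset.sum_comm]
  have h2 : ∀ T : Finset (Fin n),
      (∑ S : Finset (Fin n), if T ⊆ S then (-1:ℝ) ^ (S.card - T.card) * condExpOn μ T f x else 0)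
      = (if T = Finset.univ then 1 else 0) * condExpOn μ T f x := by
    intro T
    rw [← sum_superset_sign T, Finset.sum_mul]
    exact Finset.sum_congr rfl fun S _ => by rw [ite_mul, zero_mul]
  rw [Finset.sum_congr rfl fun T _ => h2 T]
  simp only [ite_mul, one_mul, zero_mul]
  rw [Finset.sum_ite_eq' Finset.univ Finset.univ (fun T => condExpOn μ T f x)]
  simp [condExp_univ]

end JonesAux
namespace JonesAux
variable {Alph : Type*} [Fintype Alph] [DecidableEq Alph]

/-- O: orthogonality of an `i`-independent function and a function with zero `i`-average. -/
theorem orth_aux {n : ℕ} (μ : Alph → ℝ) [Nonempty Alph] {i : Fin n}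
    (G H : (Fin n → Alph) → ℝ)
    (hG : ∀ y a, G (Function.update y i a) = G y)
    (hH : ∀ x, ∑ a : Alph, μ a * H (Function.update x i a) = 0) :
    ∑ x : Fin n → Alph, pw μ x * (G x * H x) = 0 := by
  obtain ⟨a₀⟩ := ‹Nonempty Alph›
  have hmg := marg (fun _ a => μ a) i (fun x => G x * H x)
  have h0 : ∀ (x : Fin n → Alph), pw μ x = ∏ j, μ (x j) := fun _ => rfl
  calc ∑ x : Fin n → Alph, pw μ x * (G x * H x)
      = ∑ x : Fin n → Alph, (∏ j, μ (x j)) * (G x * H x) := rfl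
    _ = ∑ a : Alph, μ a * ∑ u : {k : Fin n // k ≠ i} → Alph,
          (∏ k : {k : Fin n // k ≠ i}, μ (u k)) * (G (extI i a u) * H (extI i a u)) := hmg
    _ = ∑ u : {k : Fin n // k ≠ i} → Alph,
          ((∏ k : {k : Fin n // k ≠ i}, μ (u k)) * G (extI i a₀ u)) *
            ∑ a : Alph, μ a * H (extI i a u) := by
        simp only [Finset.mul_sum]
        rw [Finset.sum_comm]
        refine Finset.sum_congr rfl fun u _ => ?_
        refine Finset.sum_congr rfl fun a _ => ?_
        have : G (extI i a u) = G (extI i a₀ u) := by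
          rw [← update_extI i a₀ a u, hG]
        rw [this]
        ring
    _ = 0 := by
        refine Finset.sum_eq_zero fun u _ => ?_
        have : ∑ a : Alph, μ a * H (extI i a u) = 0 := by
          have := hH (extI i a₀ u)
          calc ∑ a : Alph, μ a * H (extI i a u)
              = ∑ a : Alph, μ a * H (Function.update (extI i a₀ u) i a) := by
                refine Finset.sum_congr rfl fun a _ => ?_
                rw [update_extI]
            _ = 0 := hH _
        rw [this, mul_zero]

/-- E5: orthogonality of distinct Efron–Stein components. -/
theorem esComp_orth {n : ℕ} (μ : Alph → ℝ) (hsum1 : ∑ a, μ a = 1) [Nonempty Alph]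
    {S S' : Finset (Fin n)} (hne : S ≠ S') (f : (Fin n → Alph) → ℝ) :
    ∑ x : Fin n → Alph, pw μ x * (esComp μ S f x * esComp μ S' f x) = 0 := by
  have main : ∀ (S S' : Finset (Fin n)) (i : Fin n), i ∈ S' → i ∉ S →
      (∑ x : Fin n → Alph, pw μ x * (esComp μ S f x * esComp μ S' f x)) = 0 := by
    intro S S' i hi1 hi2
    exact orth_aux μ (esComp μ S f) (esComp μ S' f)
      (fun y a => esComp_indep μ hi2 f y a)
      (fun x => esComp_avg_zero μ hsum1 hi1 f x)
  by_cases hsub : S' ⊆ S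
  · have : ¬ S ⊆ S' := fun h => hne (Finset.Subset.antisymm h hsub)
    obtain ⟨i, hiS, hiS'⟩ := Finset.not_subset.mp this
    have := main S' S i hiS hiS'
    calc ∑ x : Fin n → Alph, pw μ x * (esComp μ S f x * esComp μ S' f x)
        = ∑ x : Fin n → Alph, pw μ x * (esComp μ S' f x * esComp μ S f x) := by
          refine Finset.sum_congr rfl fun x _ => by ring
      _ = 0 := this
  · obtain ⟨i, hiS', hiS⟩ := Finset.not_subset.mp hsub
    exact main S S' i hiS' hiS

/-- Parseval. -/
theorem parseval {n : ℕ} (μ : Alph → ℝ) (hsum1 : ∑ a, μ a = 1) [Nonempty Alph]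
    (f : (Fin n → Alph) → ℝ) :
    ∑ S : Finset (Fin n), esNormSq μ S f = ∑ x : Fin n → Alph, pw μ x * f x ^ 2 := by
  have hx : ∀ x : Fin n → Alph, f x ^ 2
      = ∑ S : Finset (Fin n), ∑ S' : Finset (Fin n), esComp μ S f x * esComp μ S' f x := by
    intro x
    rw [pow_two, ← sum_esComp μ f x, Finset.sum_mul_sum]
  calc ∑ S : Finset (Fin n), esNormSq μ S f
      = ∑ S : Finset (Fin n), ∑ S' : Finset (Fin n),
          ∑ x : Fin n → Alph, pw μ x * (esComp μ S f x * esComp μ S' f x) := by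
        refine Finset.sum_congr rfl fun S _ => ?_
        rw [Finset.sum_eq_single S
          (fun S' _ hne => esComp_orth μ hsum1 (Ne.symm hne) f) (by simp)]
        unfold esNormSq pw
        refine Finset.sum_congr rfl fun x _ => by ring
    _ = ∑ S : Finset (Fin n), ∑ x : Fin n → Alph, ∑ S' : Finset (Fin n),
          pw μ x * (esComp μ S f x * esComp μ S' f x) := by
        exact Finset.sum_congr rfl fun S _ => Finset.sum_comm
    _ = ∑ x : Fin n → Alph, ∑ S : Finset (Fin n), ∑ S' : Finset (Fin n),
          pw μ x * (esComp μ S f x * esComp μ S' f x) := Finset.sum_comm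
    _ = ∑ x : Fin n → Alph, pw μ x * f x ^ 2 := by
        refine Finset.sum_congr rfl fun x _ => ?_
        rw [hx, Finset.mul_sum]
        exact Finset.sum_congr rfl fun S _ => by rw [Finset.mul_sum]

end JonesAux
namespace JonesAux
variable {Alph : Type*} [Fintype Alph] [DecidableEq Alph]

/-- restriction of one coordinate -/
def resC {n : ℕ} (i : Fin n) (a : Alph) (f : (Fin n → Alph) → ℝ) : (Fin n → Alph) → ℝ :=
  fun y => f (Function.update y i a)

theorem resC_indep {n : ℕ} (i : Fin n) (a : Alph) (f : (Fin n → Alph) → ℝ)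
    (y : Fin n → Alph) (b : Alph) :
    resC i a f (Function.update y i b) = resC i a f y := by
  unfold resC
  rw [Function.update_idem]

/-- CR: conditional expectations of a restriction. -/
theorem condExp_resC {n : ℕ} (μ : Alph → ℝ) (hsum1 : ∑ a, μ a = 1) [Nonempty Alph]
    {T : Finset (Fin n)} {i : Fin n} (hi : i ∉ T) (a : Alph)
    (f : (Fin n → Alph) → ℝ) (x : Fin n → Alph) :
    condExpOn μ T (resC i a f) x = condExpOn μ (insert i T) f (Function.update x i a) := by
  have hL := marg_indep
    (fun j b => if j ∈ T then (if b = x j then (1:ℝ) else 0) else μ b) i (resC i a f)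
    (by simp [hi, hsum1]) (fun y b => resC_indep i a f y b) a
  have hR := condExp_marg μ (insert i T) i f (Function.update x i a)
  show (∑ y : Fin n → Alph,
      (∏ j, (fun j b => if j ∈ T then (if b = x j then (1:ℝ) else 0) else μ b) j (y j)) * resC i a f y)
    = condExpOn μ (insert i T) f (Function.update x i a)
  rw [hL, hR]
  symm
  have hseL : ∀ b : Alph, (if i ∈ insert i T then (if b = Function.update x i a i then (1:ℝ) else 0)
      else μ b) = if b = a then 1 else 0 := by
    intro b
    rw [if_pos (Finset.mem_insert_self i T), Function.update_self]
  rw [Finset.sum_congr rfl fun b _ => by rw [hseL b]]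
  rw [Finset.sum_congr rfl (fun b _ => by rw [ite_mul, one_mul, zero_mul])]
  rw [Finset.sum_ite_eq' Finset.univ a]
  simp only [Finset.mem_univ, if_true]
  symm
  refine Finset.sum_congr rfl fun u _ => ?_
  have h1 : resC i a f (extI i a u) = f (extI i a u) := by
    unfold resC
    congr 1
    funext k
    by_cases hk : k = i
    · subst hk; simp
    · rw [Function.update_of_ne hk]
  rw [h1]
  congr 1
  refine Finset.prod_congr rfl fun k _ => ?_
  by_cases hk : k.1 ∈ T
  · rw [if_pos hk, if_pos (Finset.mem_insert_of_mem hk), Function.update_of_ne k.2]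
  · rw [if_neg hk, if_neg (by simp [Finset.mem_insert, k.2, hk])]

/-- DR1: Efron–Stein components of a one-coordinate restriction. -/
theorem esComp_resC {n : ℕ} (μ : Alph → ℝ) (hsum1 : ∑ a, μ a = 1) [Nonempty Alph]
    {S : Finset (Fin n)} {i : Fin n} (hi : i ∉ S) (a : Alph)
    (f : (Fin n → Alph) → ℝ) (x : Fin n → Alph) :
    esComp μ S (resC i a f) x
      = esComp μ S f x + esComp μ (insert i S) f (Function.update x i a) := by
  unfold esComp
  have hexp : ∑ T ∈ (insert i S).powerset,
      (-1:ℝ) ^ ((insert i S).card - T.card) * condExpOn μ T f (Function.update x i a)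
      = ∑ T ∈ S.powerset, (-1:ℝ) ^ ((insert i S).card - T.card) * condExpOn μ T f (Function.update x i a)
        + ∑ T ∈ S.powerset, (-1:ℝ) ^ ((insert i S).card - (insert i T).card) *
            condExpOn μ (insert i T) f (Function.update x i a) :=
    Finset.sum_powerset_insert hi _
  rw [hexp]
  have h1 : ∑ T ∈ S.powerset, (-1:ℝ) ^ ((insert i S).card - T.card) *
      condExpOn μ T f (Function.update x i a)
      = - ∑ T ∈ S.powerset, (-1:ℝ) ^ (S.card - T.card) * condExpOn μ T f x := by
    rw [← Finset.sum_neg_distrib]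
    refine Finset.sum_congr rfl fun T hT => ?_
    have hTS : T ⊆ S := Finset.mem_powerset.mp hT
    have hiT : i ∉ T := fun h => hi (hTS h)
    have hTc : T.card ≤ S.card := Finset.card_le_card hTS
    rw [condExp_indep μ hiT]
    have hc : (insert i S).card - T.card = (S.card - T.card) + 1 := by
      rw [Finset.card_insert_of_notMem hi]; omega
    rw [hc, pow_succ]
    ring
  have h2 : ∑ T ∈ S.powerset, (-1:ℝ) ^ ((insert i S).card - (insert i T).card) *
      condExpOn μ (insert i T) f (Function.update x i a)
      = ∑ T ∈ S.powerset, (-1:ℝ) ^ (S.card - T.card) * condExpOn μ T (resC i a f) x := by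
    refine Finset.sum_congr rfl fun T hT => ?_
    have hTS : T ⊆ S := Finset.mem_powerset.mp hT
    have hiT : i ∉ T := fun h => hi (hTS h)
    rw [condExp_resC μ hsum1 hiT a f x]
    have hc : (insert i S).card - (insert i T).card = S.card - T.card := by
      rw [Finset.card_insert_of_notMem hi, Finset.card_insert_of_notMem hiT]; omega
    rw [hc]
  rw [h1, h2]
  ring

/-- RES: resampling one coordinate. -/
theorem resample {n : ℕ} (μ : Alph → ℝ) (hsum1 : ∑ a, μ a = 1) [Nonempty Alph]
    (i : Fin n) (K : (Fin n → Alph) → ℝ) :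
    ∑ a : Alph, μ a * ∑ x : Fin n → Alph, pw μ x * K (Function.update x i a)
      = ∑ x : Fin n → Alph, pw μ x * K x := by
  obtain ⟨a₀⟩ := ‹Nonempty Alph›
  have hK : ∀ a : Alph, ∑ x : Fin n → Alph, pw μ x * K (Function.update x i a)
      = ∑ u : {k : Fin n // k ≠ i} → Alph,
          (∏ k : {k : Fin n // k ≠ i}, μ (u k)) * K (extI i a u) := by
    intro a
    have := marg_indep (fun _ b => μ b) i (fun x => K (Function.update x i a))
      (by simpa using hsum1) (fun y b => by simp only [Function.update_idem]) a₀
    calc ∑ x : Fin n → Alph, pw μ x * K (Function.update x i a)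
        = ∑ x : Fin n → Alph, (∏ j, μ (x j)) * K (Function.update x i a) := rfl
      _ = ∑ u : {k : Fin n // k ≠ i} → Alph,
          (∏ k : {k : Fin n // k ≠ i}, μ (u k)) * K (Function.update (extI i a₀ u) i a) := this
      _ = _ := by
          refine Finset.sum_congr rfl fun u _ => ?_
          rw [update_extI]
  rw [Finset.sum_congr rfl fun a _ => by rw [hK a]]
  exact (marg (fun _ b => μ b) i K).symm

/-- DR2: expected squared norms of components of a restriction. -/
theorem esNormSq_resC {n : ℕ} (μ : Alph → ℝ) (hsum1 : ∑ a, μ a = 1) [Nonempty Alph]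
    {S : Finset (Fin n)} {i : Fin n} (hi : i ∉ S)
    (f : (Fin n → Alph) → ℝ) :
    ∑ a : Alph, μ a * esNormSq μ S (resC i a f)
      = esNormSq μ S f + esNormSq μ (insert i S) f := by
  have hpt : ∀ (a : Alph), esNormSq μ S (resC i a f)
      = esNormSq μ S f
        + ∑ x : Fin n → Alph, pw μ x * (esComp μ (insert i S) f (Function.update x i a)) ^ 2
        + 2 * ∑ x : Fin n → Alph, pw μ x *
            (esComp μ S f x * esComp μ (insert i S) f (Function.update x i a)) := by
    intro a
    unfold esNormSq
    rw [Finset.mul_sum, ← Finset.sum_add_distrib, ← Finset.sum_add_distrib]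
    refine Finset.sum_congr rfl fun x _ => ?_
    rw [esComp_resC μ hsum1 hi a f x]
    show (∏ k, μ (x k)) * _ = pw μ x * _ + pw μ x * _ + 2 * (pw μ x * _)
    unfold pw
    ring
  rw [Finset.sum_congr rfl fun a _ => by rw [hpt a, mul_add, mul_add]]
  rw [Finset.sum_add_distrib, Finset.sum_add_distrib]
  have e1 : ∑ a : Alph, μ a * esNormSq μ S f = esNormSq μ S f := by
    rw [← Finset.sum_mul, hsum1, one_mul]
  have e2 : ∑ a : Alph, μ a *
      ∑ x : Fin n → Alph, pw μ x * (esComp μ (insert i S) f (Function.update x i a)) ^ 2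
      = esNormSq μ (insert i S) f := by
    exact resample μ hsum1 i (fun x => (esComp μ (insert i S) f x) ^ 2)
  have e3 : ∑ a : Alph, μ a * (2 * ∑ x : Fin n → Alph, pw μ x *
      (esComp μ S f x * esComp μ (insert i S) f (Function.update x i a))) = 0 := by
    have swap : ∀ a : Alph, ∑ x : Fin n → Alph, pw μ x *
        (esComp μ S f x * esComp μ (insert i S) f (Function.update x i a))
        = ∑ x : Fin n → Alph, (pw μ x * esComp μ S f x) *
            esComp μ (insert i S) f (Function.update x i a) := by
      intro a
      exact Finset.sum_congr rfl fun x _ => by ring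
    rw [Finset.sum_congr rfl fun a _ => by rw [swap a]]
    have : ∑ a : Alph, μ a * (2 * ∑ x : Fin n → Alph, (pw μ x * esComp μ S f x) *
        esComp μ (insert i S) f (Function.update x i a))
        = 2 * ∑ x : Fin n → Alph, (pw μ x * esComp μ S f x) *
            (∑ a : Alph, μ a * esComp μ (insert i S) f (Function.update x i a)) := by
      simp only [Finset.mul_sum]
      rw [Finset.sum_comm]
      refine Finset.sum_congr rfl fun x _ => ?_
      refine Finset.sum_congr rfl fun a _ => by ring
    rw [this]
    rw [Finset.sum_congr rfl fun x _ => by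
      rw [esComp_avg_zero μ hsum1 (Finset.mem_insert_self i S) f x, mul_zero]]
    simp
  rw [e1, e2, e3]
  ring

end JonesAux
namespace JonesAux
variable {Alph : Type*} [Fintype Alph] [DecidableEq Alph]

def Psi (μ : Alph → ℝ) (ρ : ℝ) {n : ℕ} (f : (Fin n → Alph) → ℝ) : ℝ :=
  ∑ S : Finset (Fin n), ρ ^ S.card * esNormSq μ S f

theorem esNormSq_nonneg {n : ℕ} {μ : Alph → ℝ} (hnn : ∀ a, 0 ≤ μ a)
    (S : Finset (Fin n)) (f : (Fin n → Alph) → ℝ) : 0 ≤ esNormSq μ S f :=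
  Finset.sum_nonneg fun x _ =>
    mul_nonneg (Finset.prod_nonneg fun k _ => hnn (x k)) (sq_nonneg _)

theorem Psi_nonneg {n : ℕ} {μ : Alph → ℝ} (hnn : ∀ a, 0 ≤ μ a) {ρ : ℝ} (hρ : 0 ≤ ρ)
    (f : (Fin n → Alph) → ℝ) : 0 ≤ Psi μ ρ f :=
  Finset.sum_nonneg fun S _ => mul_nonneg (pow_nonneg hρ _) (esNormSq_nonneg hnn S f)

theorem noisyInf_nonneg {n : ℕ} {μ : Alph → ℝ} (hnn : ∀ a, 0 ≤ μ a) {ρ : ℝ} (hρ : 0 ≤ ρ)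
    (f : (Fin n → Alph) → ℝ) (i : Fin n) : 0 ≤ noisyInf μ ρ f i := by
  refine Finset.sum_nonneg fun S _ => ?_
  by_cases h : i ∈ S
  · rw [if_pos h]
    exact mul_nonneg (pow_nonneg hρ _) (esNormSq_nonneg hnn S f)
  · rw [if_neg h]

theorem Psi_le_one {n : ℕ} {μ : Alph → ℝ} (hnn : ∀ a, 0 ≤ μ a) (hsum1 : ∑ a, μ a = 1)
    [Nonempty Alph] {ρ : ℝ} (hρ0 : 0 ≤ ρ) (hρ1 : ρ ≤ 1)
    (f : (Fin n → Alph) → ℝ) (hf : ∀ x, 0 ≤ f x ∧ f x ≤ 1) : Psi μ ρ f ≤ 1 := by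
  have h1 : Psi μ ρ f ≤ ∑ S : Finset (Fin n), esNormSq μ S f := by
    refine Finset.sum_le_sum fun S _ => ?_
    exact mul_le_of_le_one_left (esNormSq_nonneg hnn S f) (pow_le_one₀ hρ0 hρ1)
  have h2 : ∑ x : Fin n → Alph, pw μ x * f x ^ 2 ≤ 1 := by
    calc ∑ x : Fin n → Alph, pw μ x * f x ^ 2
        ≤ ∑ x : Fin n → Alph, pw μ x := by
          refine Finset.sum_le_sum fun x _ => ?_
          obtain ⟨ha, hb⟩ := hf x
          have hp := pw_nonneg hnn x
          nlinarith [mul_nonneg hp (mul_nonneg (sub_nonneg.mpr hb)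
            (by linarith : (0:ℝ) ≤ 1 + f x))]
      _ = 1 := sum_pw hsum1
  calc Psi μ ρ f ≤ ∑ S : Finset (Fin n), esNormSq μ S f := h1
    _ = ∑ x : Fin n → Alph, pw μ x * f x ^ 2 := parseval μ hsum1 f
    _ ≤ 1 := h2

theorem split_mem {n : ℕ} (i : Fin n) (g : Finset (Fin n) → ℝ) :
    ∑ S : Finset (Fin n), g S
      = ∑ S : Finset (Fin n), (if i ∈ S then g S else 0)
        + ∑ S : Finset (Fin n), (if i ∈ S then 0 else g S) := by
  rw [← Finset.sum_add_distrib]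
  exact Finset.sum_congr rfl fun S _ => by by_cases h : i ∈ S <;> simp [h]

theorem reindex_insert {n : ℕ} (i : Fin n) (g : Finset (Fin n) → ℝ) :
    ∑ S : Finset (Fin n), (if i ∈ S then 0 else g (insert i S))
      = ∑ S : Finset (Fin n), (if i ∈ S then g S else 0) := by
  have h1 : ∑ S : Finset (Fin n), (if i ∈ S then 0 else g (insert i S))
      = ∑ S ∈ Finset.univ.filter (fun S : Finset (Fin n) => i ∉ S), g (insert i S) := by
    rw [Finset.sum_filter]
    exact Finset.sum_congr rfl fun S _ => by by_cases h : i ∈ S <;> simp [h]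
  have h2 : ∑ S : Finset (Fin n), (if i ∈ S then g S else 0)
      = ∑ S ∈ Finset.univ.filter (fun S : Finset (Fin n) => i ∈ S), g S := by
    rw [Finset.sum_filter]
  rw [h1, h2]
  refine Finset.sum_nbij' (i := fun S => insert i S) (j := fun S => S.erase i) ?_ ?_ ?_ ?_ ?_
  · intro S hS
    simp only [Finset.mem_filter, Finset.mem_univ, true_and] at hS ⊢
    exact Finset.mem_insert_self i S
  · intro S hS
    simp only [Finset.mem_filter, Finset.mem_univ, true_and] at hS ⊢
    exact Finset.notMem_erase i S
  · intro S hS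
    simp only [Finset.mem_filter, Finset.mem_univ, true_and] at hS
    exact Finset.erase_insert hS
  · intro S hS
    simp only [Finset.mem_filter, Finset.mem_univ, true_and] at hS
    exact Finset.insert_erase hS
  · intro S hS
    rfl

theorem esNormSq_resC_mem {n : ℕ} (μ : Alph → ℝ) (hsum1 : ∑ a, μ a = 1) [Nonempty Alph]
    {S : Finset (Fin n)} {i : Fin n} (hi : i ∈ S) (a : Alph) (f : (Fin n → Alph) → ℝ) :
    esNormSq μ S (resC i a f) = 0 := by
  unfold esNormSq
  refine Finset.sum_eq_zero fun x _ => ?_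
  rw [esComp_dummy μ hsum1 hi (resC i a f) (fun y b => resC_indep i a f y b) x]
  simp

/-- KEY1 -/
theorem avg_Psi_resC {n : ℕ} (μ : Alph → ℝ) (hsum1 : ∑ a, μ a = 1) [Nonempty Alph]
    {ρ : ℝ} (hρ0 : 0 < ρ) (i : Fin n) (f : (Fin n → Alph) → ℝ) :
    ∑ a : Alph, μ a * Psi μ ρ (resC i a f)
      = Psi μ ρ f + (ρ⁻¹ - 1) * noisyInf μ ρ f i := by
  have hswap : ∑ a : Alph, μ a * Psi μ ρ (resC i a f)
      = ∑ S : Finset (Fin n), ρ ^ S.card * ∑ a : Alph, μ a * esNormSq μ S (resC i a f) := by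
    unfold Psi
    simp only [Finset.mul_sum]
    rw [Finset.sum_comm]
    refine Finset.sum_congr rfl fun S _ => ?_
    exact Finset.sum_congr rfl fun a _ => by ring
  rw [hswap]
  have hterm : ∀ S : Finset (Fin n), ρ ^ S.card * ∑ a : Alph, μ a * esNormSq μ S (resC i a f)
      = if i ∈ S then 0
        else ρ ^ S.card * esNormSq μ S f + ρ ^ S.card * esNormSq μ (insert i S) f := by
    intro S
    by_cases h : i ∈ S
    · rw [if_pos h]
      rw [Finset.sum_congr rfl fun a _ => by rw [esNormSq_resC_mem μ hsum1 h a f, mul_zero]]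
      simp
    · rw [if_neg h, esNormSq_resC μ hsum1 h f]
      ring
  rw [Finset.sum_congr rfl fun S _ => hterm S]
  have hsplit : ∑ S : Finset (Fin n),
      (if i ∈ S then 0
        else ρ ^ S.card * esNormSq μ S f + ρ ^ S.card * esNormSq μ (insert i S) f)
      = ∑ S : Finset (Fin n), (if i ∈ S then 0 else ρ ^ S.card * esNormSq μ S f)
        + ∑ S : Finset (Fin n), (if i ∈ S then 0 else ρ ^ S.card * esNormSq μ (insert i S) f) := by
    rw [← Finset.sum_add_distrib]
    exact Finset.sum_congr rfl fun S _ => by by_cases h : i ∈ S <;> simp [h]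
  rw [hsplit]
  have hIns : ∑ S : Finset (Fin n), (if i ∈ S then 0 else ρ ^ S.card * esNormSq μ (insert i S) f)
      = ρ⁻¹ * noisyInf μ ρ f i := by
    have step : ∀ S : Finset (Fin n),
        (if i ∈ S then 0 else ρ ^ S.card * esNormSq μ (insert i S) f)
        = ρ⁻¹ * (if i ∈ S then 0
            else ρ ^ (insert i S).card * esNormSq μ (insert i S) f) := by
      intro S
      by_cases h : i ∈ S
      · simp [h]
      · rw [if_neg h, if_neg h, Finset.card_insert_of_notMem h, pow_succ]
        field_simp
    rw [Finset.sum_congr rfl fun S _ => step S, ← Finset.mul_sum]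
    congr 1
    rw [reindex_insert i (fun S => ρ ^ S.card * esNormSq μ S f)]
    rfl
  rw [hIns]
  have hPsi : Psi μ ρ f = ∑ S : Finset (Fin n), (if i ∈ S then ρ ^ S.card * esNormSq μ S f else 0)
      + ∑ S : Finset (Fin n), (if i ∈ S then 0 else ρ ^ S.card * esNormSq μ S f) :=
    split_mem i _
  have hInf : noisyInf μ ρ f i
      = ∑ S : Finset (Fin n), (if i ∈ S then ρ ^ S.card * esNormSq μ S f else 0) := rfl
  rw [hPsi, hInf]
  ring

/-- KEY2 -/
theorem noisyInf_le_avg_resC {n : ℕ} (μ : Alph → ℝ) (hnn : ∀ a, 0 ≤ μ a)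
    (hsum1 : ∑ a, μ a = 1) [Nonempty Alph]
    {ρ : ℝ} (hρ0 : 0 < ρ) (hρ1 : ρ ≤ 1) {i j : Fin n} (hij : j ≠ i)
    (f : (Fin n → Alph) → ℝ) :
    noisyInf μ ρ f j ≤ ∑ a : Alph, μ a * noisyInf μ ρ (resC i a f) j := by
  have hswap : ∑ a : Alph, μ a * noisyInf μ ρ (resC i a f) j
      = ∑ S : Finset (Fin n),
          (if j ∈ S then ρ ^ S.card * ∑ a : Alph, μ a * esNormSq μ S (resC i a f) else 0) := by
    unfold noisyInf
    simp only [Finset.mul_sum]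
    rw [Finset.sum_comm]
    refine Finset.sum_congr rfl fun S _ => ?_
    by_cases h : j ∈ S
    · simp only [if_pos h]
      exact Finset.sum_congr rfl fun a _ => by ring
    · simp [h]
  rw [hswap]
  have hterm : ∀ S : Finset (Fin n),
      (if j ∈ S then ρ ^ S.card * ∑ a : Alph, μ a * esNormSq μ S (resC i a f) else 0)
      = (if i ∈ S then 0 else
          (if j ∈ S then ρ ^ S.card * esNormSq μ S f else 0)
          + (if j ∈ S then ρ ^ S.card * esNormSq μ (insert i S) f else 0)) := by
    intro S
    by_cases hiS : i ∈ S
    · rw [if_pos hiS]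
      by_cases hjS : j ∈ S
      · rw [if_pos hjS]
        rw [Finset.sum_congr rfl fun a _ => by rw [esNormSq_resC_mem μ hsum1 hiS a f, mul_zero]]
        simp
      · rw [if_neg hjS]
    · rw [if_neg hiS]
      by_cases hjS : j ∈ S
      · rw [if_pos hjS, if_pos hjS, if_pos hjS, esNormSq_resC μ hsum1 hiS f]
        ring
      · simp [hjS]
  rw [Finset.sum_congr rfl fun S _ => hterm S]
  have hsplit : ∑ S : Finset (Fin n), (if i ∈ S then 0 else
        (if j ∈ S then ρ ^ S.card * esNormSq μ S f else 0)
        + (if j ∈ S then ρ ^ S.card * esNormSq μ (insert i S) f else 0))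
      = ∑ S : Finset (Fin n), (if i ∈ S then 0 else
            (if j ∈ S then ρ ^ S.card * esNormSq μ S f else 0))
        + ∑ S : Finset (Fin n), (if i ∈ S then 0 else
            (if j ∈ S then ρ ^ S.card * esNormSq μ (insert i S) f else 0)) := by
    rw [← Finset.sum_add_distrib]
    exact Finset.sum_congr rfl fun S _ => by by_cases h : i ∈ S <;> simp [h]
  rw [hsplit]
  have hLHS : noisyInf μ ρ f j
      = ∑ S : Finset (Fin n), (if i ∈ S then (if j ∈ S then ρ ^ S.card * esNormSq μ S f else 0) else 0)
        + ∑ S : Finset (Fin n), (if i ∈ S then 0 else (if j ∈ S then ρ ^ S.card * esNormSq μ S f else 0)) :=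
    split_mem i _
  rw [hLHS]
  have hmain : ∑ S : Finset (Fin n),
        (if i ∈ S then (if j ∈ S then ρ ^ S.card * esNormSq μ S f else 0) else 0)
      ≤ ∑ S : Finset (Fin n), (if i ∈ S then 0 else
          (if j ∈ S then ρ ^ S.card * esNormSq μ (insert i S) f else 0)) := by
    rw [← reindex_insert i (fun S => if j ∈ S then ρ ^ S.card * esNormSq μ S f else 0)]
    refine Finset.sum_le_sum fun S _ => ?_
    by_cases hiS : i ∈ S
    · simp [hiS]
    · rw [if_neg hiS, if_neg hiS]
      by_cases hjS : j ∈ S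
      · have hjIns : j ∈ insert i S := Finset.mem_insert_of_mem hjS
        rw [if_pos hjIns, if_pos hjS]
        refine mul_le_mul_of_nonneg_right ?_ (esNormSq_nonneg hnn _ f)
        rw [Finset.card_insert_of_notMem hiS]
        exact pow_le_pow_of_le_one (le_of_lt hρ0) hρ1 (Nat.le_succ _)
      · have : j ∉ insert i S := by
          simp [Finset.mem_insert, hij, hjS]
        rw [if_neg this, if_neg hjS]
  linarith
end JonesAux
namespace JonesAux
variable {Alph : Type*} [Fintype Alph] [DecidableEq Alph]

def hres {n : ℕ} (f : (Fin n → Alph) → ℝ) (J : Finset (Fin n)) (z : Fin n → Alph) :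
    (Fin n → Alph) → ℝ :=
  fun y => f (fun k => if k ∈ J then z k else y k)

def Phi (μ : Alph → ℝ) (ρ : ℝ) {n : ℕ} (f : (Fin n → Alph) → ℝ) (J : Finset (Fin n)) : ℝ :=
  ∑ z : Fin n → Alph, pw μ z * Psi μ ρ (hres f J z)

def InfE (μ : Alph → ℝ) (ρ : ℝ) {n : ℕ} (f : (Fin n → Alph) → ℝ) (J : Finset (Fin n))
    (i : Fin n) : ℝ :=
  ∑ z : Fin n → Alph, pw μ z * noisyInf μ ρ (hres f J z) i

theorem hres_insert {n : ℕ} (f : (Fin n → Alph) → ℝ) {J : Finset (Fin n)} {i : Fin n}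
    (hi : i ∉ J) (z : Fin n → Alph) :
    hres f (insert i J) z = resC i (z i) (hres f J z) := by
  funext y
  show f _ = f _
  congr 1
  funext k
  by_cases hk : k ∈ J
  · rw [if_pos (Finset.mem_insert_of_mem hk), if_pos hk]
  · by_cases hki : k = i
    · subst hki
      rw [if_pos (Finset.mem_insert_self k J), if_neg hk, Function.update_self]
    · rw [if_neg (by simp [Finset.mem_insert, hki, hk]), if_neg hk,
        Function.update_of_ne hki]

theorem hres_update {n : ℕ} (f : (Fin n → Alph) → ℝ) {J : Finset (Fin n)} {i : Fin n}
    (hi : i ∉ J) (z : Fin n → Alph) (a : Alph) :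
    hres f J (Function.update z i a) = hres f J z := by
  funext y
  show f _ = f _
  congr 1
  funext k
  by_cases hk : k ∈ J
  · have : k ≠ i := fun h => hi (h ▸ hk)
    rw [if_pos hk, if_pos hk, Function.update_of_ne this]
  · rw [if_neg hk, if_neg hk]

theorem hres_congr {n : ℕ} (f : (Fin n → Alph) → ℝ) {J : Finset (Fin n)} {z₁ z₂ : Fin n → Alph}
    (h : ∀ k ∈ J, z₁ k = z₂ k) : hres f J z₁ = hres f J z₂ := by
  funext y
  show f _ = f _
  congr 1
  funext k
  by_cases hk : k ∈ J
  · rw [if_pos hk, if_pos hk, h k hk]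
  · rw [if_neg hk, if_neg hk]

theorem hres_indep {n : ℕ} (f : (Fin n → Alph) → ℝ) {J : Finset (Fin n)} {k : Fin n}
    (hk : k ∈ J) (z y : Fin n → Alph) (a : Alph) :
    hres f J z (Function.update y k a) = hres f J z y := by
  show f _ = f _
  congr 1
  funext k'
  by_cases hk' : k' ∈ J
  · rw [if_pos hk', if_pos hk']
  · have : k' ≠ k := fun h => hk' (h ▸ hk)
    rw [if_neg hk', if_neg hk', Function.update_of_ne this]

theorem noisyInf_hres_mem {n : ℕ} (μ : Alph → ℝ) (hsum1 : ∑ a, μ a = 1) [Nonempty Alph]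
    (ρ : ℝ) (f : (Fin n → Alph) → ℝ) {J : Finset (Fin n)} {i : Fin n} (hi : i ∈ J)
    (z : Fin n → Alph) : noisyInf μ ρ (hres f J z) i = 0 := by
  unfold noisyInf
  refine Finset.sum_eq_zero fun S _ => ?_
  by_cases hS : i ∈ S
  · rw [if_pos hS]
    have : esNormSq μ S (hres f J z) = 0 := by
      unfold esNormSq
      refine Finset.sum_eq_zero fun x _ => ?_
      rw [esComp_dummy μ hsum1 hS (hres f J z) (fun y a => hres_indep f hi z y a) x]
      simp
    rw [this, mul_zero]
  · rw [if_neg hS]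

/-- Φ grows by `(ρ⁻¹-1)·InfE` when a coordinate is added. -/
theorem Phi_insert {n : ℕ} (μ : Alph → ℝ) (hsum1 : ∑ a, μ a = 1) [Nonempty Alph]
    {ρ : ℝ} (hρ0 : 0 < ρ) (f : (Fin n → Alph) → ℝ) {J : Finset (Fin n)} {i : Fin n}
    (hi : i ∉ J) :
    Phi μ ρ f (insert i J) = Phi μ ρ f J + (ρ⁻¹ - 1) * InfE μ ρ f J i := by
  have h1 : Phi μ ρ f (insert i J)
      = ∑ z : Fin n → Alph, pw μ z * Psi μ ρ (resC i (z i) (hres f J z)) := by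
    unfold Phi
    exact Finset.sum_congr rfl fun z _ => by rw [hres_insert f hi z]
  have h2 : ∀ (a : Alph) (z : Fin n → Alph),
      Psi μ ρ (resC i (Function.update z i a i) (hres f J (Function.update z i a)))
        = Psi μ ρ (resC i a (hres f J z)) := by
    intro a z
    rw [Function.update_self, hres_update f hi z a]
  have h3 : Phi μ ρ f (insert i J)
      = ∑ a : Alph, μ a * ∑ z : Fin n → Alph, pw μ z * Psi μ ρ (resC i a (hres f J z)) := by
    have R := resample μ hsum1 i (fun z => Psi μ ρ (resC i (z i) (hres f J z)))
    calc Phi μ ρ f (insert i J)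
        = ∑ z : Fin n → Alph, pw μ z * Psi μ ρ (resC i (z i) (hres f J z)) := h1
      _ = ∑ a : Alph, μ a * ∑ z : Fin n → Alph, pw μ z *
            Psi μ ρ (resC i (Function.update z i a i) (hres f J (Function.update z i a))) := by
          exact R.symm
      _ = ∑ a : Alph, μ a * ∑ z : Fin n → Alph, pw μ z * Psi μ ρ (resC i a (hres f J z)) := by
          refine Finset.sum_congr rfl fun a _ => ?_
          refine congrArg _ (Finset.sum_congr rfl fun z _ => ?_)
          rw [h2 a z]
  rw [h3]
  have h4 : ∑ a : Alph, μ a * ∑ z : Fin n → Alph, pw μ z * Psi μ ρ (resC i a (hres f J z))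
      = ∑ z : Fin n → Alph, pw μ z * ∑ a : Alph, μ a * Psi μ ρ (resC i a (hres f J z)) := by
    simp only [Finset.mul_sum]
    rw [Finset.sum_comm]
    refine Finset.sum_congr rfl fun z _ => ?_
    exact Finset.sum_congr rfl fun a _ => by ring
  rw [h4]
  unfold Phi InfE
  rw [Finset.mul_sum, ← Finset.sum_add_distrib]
  refine Finset.sum_congr rfl fun z _ => ?_
  rw [avg_Psi_resC μ hsum1 hρ0 i (hres f J z)]
  ring

/-- monotonicity of expected influence under one more restriction -/
theorem InfE_insert_le {n : ℕ} (μ : Alph → ℝ) (hnn : ∀ a, 0 ≤ μ a) (hsum1 : ∑ a, μ a = 1)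
    [Nonempty Alph] {ρ : ℝ} (hρ0 : 0 < ρ) (hρ1 : ρ ≤ 1)
    (f : (Fin n → Alph) → ℝ) {J : Finset (Fin n)} {i j : Fin n} (hi : i ∉ J) (hij : j ≠ i) :
    InfE μ ρ f J j ≤ InfE μ ρ f (insert i J) j := by
  have h1 : InfE μ ρ f (insert i J) j
      = ∑ a : Alph, μ a * ∑ z : Fin n → Alph, pw μ z *
          noisyInf μ ρ (resC i a (hres f J z)) j := by
    have R := resample μ hsum1 i (fun z => noisyInf μ ρ (resC i (z i) (hres f J z)) j)
    calc InfE μ ρ f (insert i J) j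
        = ∑ z : Fin n → Alph, pw μ z * noisyInf μ ρ (resC i (z i) (hres f J z)) j := by
          unfold InfE
          exact Finset.sum_congr rfl fun z _ => by rw [hres_insert f hi z]
      _ = ∑ a : Alph, μ a * ∑ z : Fin n → Alph, pw μ z *
            noisyInf μ ρ (resC i (Function.update z i a i)
              (hres f J (Function.update z i a))) j := by
          exact R.symm
      _ = ∑ a : Alph, μ a * ∑ z : Fin n → Alph, pw μ z *
            noisyInf μ ρ (resC i a (hres f J z)) j := by
          refine Finset.sum_congr rfl fun a _ => ?_
          refine congrArg _ (Finset.sum_congr rfl fun z _ => ?_)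
          rw [Function.update_self, hres_update f hi z a]
  have h2 : ∑ a : Alph, μ a * ∑ z : Fin n → Alph, pw μ z *
        noisyInf μ ρ (resC i a (hres f J z)) j
      = ∑ z : Fin n → Alph, pw μ z * ∑ a : Alph, μ a *
          noisyInf μ ρ (resC i a (hres f J z)) j := by
    simp only [Finset.mul_sum]
    rw [Finset.sum_comm]
    refine Finset.sum_congr rfl fun z _ => ?_
    exact Finset.sum_congr rfl fun a _ => by ring
  rw [h1, h2]
  unfold InfE
  refine Finset.sum_le_sum fun z _ => ?_
  refine mul_le_mul_of_nonneg_left ?_ (pw_nonneg hnn z)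
  exact noisyInf_le_avg_resC μ hnn hsum1 hρ0 hρ1 hij (hres f J z)

theorem InfE_nonneg {n : ℕ} {μ : Alph → ℝ} (hnn : ∀ a, 0 ≤ μ a) {ρ : ℝ} (hρ0 : 0 ≤ ρ)
    (f : (Fin n → Alph) → ℝ) (J : Finset (Fin n)) (i : Fin n) : 0 ≤ InfE μ ρ f J i :=
  Finset.sum_nonneg fun z _ =>
    mul_nonneg (pw_nonneg hnn z) (noisyInf_nonneg hnn hρ0 _ i)

theorem Phi_nonneg {n : ℕ} {μ : Alph → ℝ} (hnn : ∀ a, 0 ≤ μ a) {ρ : ℝ} (hρ0 : 0 ≤ ρ)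
    (f : (Fin n → Alph) → ℝ) (J : Finset (Fin n)) : 0 ≤ Phi μ ρ f J :=
  Finset.sum_nonneg fun z _ =>
    mul_nonneg (pw_nonneg hnn z) (Psi_nonneg hnn hρ0 _)

theorem Phi_le_one {n : ℕ} {μ : Alph → ℝ} (hnn : ∀ a, 0 ≤ μ a) (hsum1 : ∑ a, μ a = 1)
    [Nonempty Alph] {ρ : ℝ} (hρ0 : 0 ≤ ρ) (hρ1 : ρ ≤ 1)
    (f : (Fin n → Alph) → ℝ) (hf : ∀ x, 0 ≤ f x ∧ f x ≤ 1) (J : Finset (Fin n)) :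
    Phi μ ρ f J ≤ 1 := by
  calc Phi μ ρ f J ≤ ∑ z : Fin n → Alph, pw μ z := by
        refine Finset.sum_le_sum fun z _ => ?_
        calc pw μ z * Psi μ ρ (hres f J z) ≤ pw μ z * 1 := by
              refine mul_le_mul_of_nonneg_left ?_ (pw_nonneg hnn z)
              exact Psi_le_one hnn hsum1 hρ0 hρ1 _ (fun x => hf _)
          _ = pw μ z := mul_one _
    _ = 1 := sum_pw hsum1

/-- iterated monotonicity of `InfE` -/
theorem InfE_union_le {n : ℕ} (μ : Alph → ℝ) (hnn : ∀ a, 0 ≤ μ a) (hsum1 : ∑ a, μ a = 1)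
    [Nonempty Alph] {ρ : ℝ} (hρ0 : 0 < ρ) (hρ1 : ρ ≤ 1)
    (f : (Fin n → Alph) → ℝ) (J : Finset (Fin n)) (B : Finset (Fin n)) {i : Fin n}
    (hi : i ∉ J ∪ B) :
    InfE μ ρ f J i ≤ InfE μ ρ f (J ∪ B) i := by
  classical
  induction B using Finset.induction_on with
  | empty => rw [Finset.union_empty]
  | @insert a B ha ih =>
      have hiJB : i ∉ J ∪ B := by
        intro h
        exact hi (by
          rcases Finset.mem_union.mp h with h' | h'
          · exact Finset.mem_union_left _ h'
          · exact Finset.mem_union_right _ (Finset.mem_insert_of_mem h'))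
      have step := ih hiJB
      rw [Finset.union_insert]
      by_cases haJB : a ∈ J ∪ B
      · rw [Finset.insert_eq_self.mpr haJB]
        exact step
      · have hia : i ≠ a := by
          intro h
          exact hi (by rw [h]; exact Finset.mem_union_right _ (Finset.mem_insert_self a B))
        calc InfE μ ρ f J i ≤ InfE μ ρ f (J ∪ B) i := step
          _ ≤ InfE μ ρ f (insert a (J ∪ B)) i :=
              InfE_insert_le μ hnn hsum1 hρ0 hρ1 f haJB hia

/-- Φ gain from adding a whole set of fresh coordinates. -/
theorem Phi_union_gain {n : ℕ} (μ : Alph → ℝ) (hnn : ∀ a, 0 ≤ μ a) (hsum1 : ∑ a, μ a = 1)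
    [Nonempty Alph] {ρ : ℝ} (hρ0 : 0 < ρ) (hρ1 : ρ ≤ 1)
    (f : (Fin n → Alph) → ℝ) (J : Finset (Fin n)) (B : Finset (Fin n))
    (hB : ∀ i ∈ B, i ∉ J) :
    Phi μ ρ f J + (ρ⁻¹ - 1) * ∑ i ∈ B, InfE μ ρ f J i ≤ Phi μ ρ f (J ∪ B) := by
  classical
  have hρinv : (0:ℝ) ≤ ρ⁻¹ - 1 := by
    have h1 : (1:ℝ) ≤ ρ⁻¹ := (one_le_inv₀ hρ0).mpr hρ1
    linarith
  induction B using Finset.induction_on with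
  | empty => simp
  | @insert a B ha ih =>
      have haJ : a ∉ J := hB a (Finset.mem_insert_self a B)
      have haB : a ∉ J ∪ B := by
        rw [Finset.mem_union]
        rintro (h | h)
        · exact haJ h
        · exact ha h
      have IH := ih (fun i hi => hB i (Finset.mem_insert_of_mem hi))
      rw [Finset.union_insert]
      rw [Finset.sum_insert ha]
      have hstep : Phi μ ρ f (insert a (J ∪ B))
          = Phi μ ρ f (J ∪ B) + (ρ⁻¹ - 1) * InfE μ ρ f (J ∪ B) a :=
        Phi_insert μ hsum1 hρ0 f haB
      have hmono : InfE μ ρ f J a ≤ InfE μ ρ f (J ∪ B) a :=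
        InfE_union_le μ hnn hsum1 hρ0 hρ1 f J B haB
      have hc : (ρ⁻¹ - 1) * InfE μ ρ f J a ≤ (ρ⁻¹ - 1) * InfE μ ρ f (J ∪ B) a :=
        mul_le_mul_of_nonneg_left hmono hρinv
      rw [hstep]
      have expand : Phi μ ρ f J + (ρ⁻¹ - 1) * (InfE μ ρ f J a + ∑ i ∈ B, InfE μ ρ f J i)
          = (Phi μ ρ f J + (ρ⁻¹ - 1) * ∑ i ∈ B, InfE μ ρ f J i)
            + (ρ⁻¹ - 1) * InfE μ ρ f J a := by ring
      rw [expand]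
      linarith

theorem Phi_mono {n : ℕ} (μ : Alph → ℝ) (hnn : ∀ a, 0 ≤ μ a) (hsum1 : ∑ a, μ a = 1)
    [Nonempty Alph] {ρ : ℝ} (hρ0 : 0 < ρ) (hρ1 : ρ ≤ 1)
    (f : (Fin n → Alph) → ℝ) {J J' : Finset (Fin n)} (hJJ : J ⊆ J') :
    Phi μ ρ f J ≤ Phi μ ρ f J' := by
  classical
  have h := Phi_union_gain μ hnn hsum1 hρ0 hρ1 f J (J' \ J) (fun i hi => (Finset.mem_sdiff.mp hi).2)
  rw [Finset.union_sdiff_of_subset hJJ] at h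
  have hρinv : (0:ℝ) ≤ ρ⁻¹ - 1 := by
    have h1 : (1:ℝ) ≤ ρ⁻¹ := (one_le_inv₀ hρ0).mpr hρ1
    linarith
  have hs : 0 ≤ ∑ i ∈ J' \ J, InfE μ ρ f J i :=
    Finset.sum_nonneg fun i _ => InfE_nonneg hnn (le_of_lt hρ0) f J i
  nlinarith
end JonesAux
namespace JonesAux
variable {Alph : Type*} [Fintype Alph] [DecidableEq Alph]

theorem sum_prod_one {ι : Type*} [Fintype ι] [DecidableEq ι] {μ : Alph → ℝ}
    (hsum1 : ∑ a, μ a = 1) :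
    ∑ u : ι → Alph, ∏ k, μ (u k) = 1 := by
  have : (∏ _k : ι, ∑ a, μ a) = ∑ u : ι → Alph, ∏ k, μ (u k) :=
    Finset.prod_univ_sum (fun _ => Finset.univ) fun _ a => μ a
  rw [← this]
  simp [hsum1]

def splitJ {n : ℕ} (J : Finset (Fin n)) :
    (Fin n → Alph) ≃ ((↥J → Alph) × ({k : Fin n // k ∉ J} → Alph)) where
  toFun z := (fun i => z i.1, fun k => z k.1)
  invFun p := fun k => if h : k ∈ J then p.1 ⟨k, h⟩ else p.2 ⟨k, h⟩
  left_inv z := by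
    funext k
    by_cases h : k ∈ J <;> simp [h]
  right_inv p := by
    refine Prod.ext ?_ ?_
    · funext i
      simp [i.2]
    · funext k
      simp [k.2]

theorem pw_split {n : ℕ} (μ : Alph → ℝ) (J : Finset (Fin n)) (z : Fin n → Alph) :
    pw μ z = (∏ i : ↥J, μ (z i.1)) * ∏ k : {k : Fin n // k ∉ J}, μ (z k.1) := by
  unfold pw
  rw [← Finset.prod_mul_prod_compl J (fun k => μ (z k))]
  congr 1
  · exact Finset.prod_subtype J (fun k => Iff.rfl) _
  · exact Finset.prod_subtype Jᶜ (fun k => by simp) _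

/-- bridge between subtype-indexed restriction sums and full-space sums -/
theorem sum_subtype_pw {n : ℕ} (μ : Alph → ℝ) (hsum1 : ∑ a, μ a = 1) (J : Finset (Fin n))
    (G : (↥J → Alph) → ℝ) :
    ∑ x : ↥J → Alph, (∏ i, μ (x i)) * G x
      = ∑ z : Fin n → Alph, pw μ z * G (fun i => z i.1) := by
  rw [← Equiv.sum_comp (splitJ J).symm (fun z => pw μ z * G (fun i => z i.1)),
    Fintype.sum_prod_type]
  refine Finset.sum_congr rfl fun x _ => ?_
  have hx : ∀ u : {k : Fin n // k ∉ J} → Alph,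
      (fun i : ↥J => ((splitJ J).symm (x, u)) i.1) = x := by
    intro u
    funext i
    show (if h : i.1 ∈ J then x ⟨i.1, h⟩ else u ⟨i.1, h⟩) = x i
    rw [dif_pos i.2]
  have hpw : ∀ u : {k : Fin n // k ∉ J} → Alph,
      pw μ ((splitJ J).symm (x, u)) = (∏ i : ↥J, μ (x i)) * ∏ k, μ (u k) := by
    intro u
    rw [pw_split μ J]
    congr 1
    · refine Finset.prod_congr rfl fun i _ => ?_
      show μ (if h : i.1 ∈ J then x ⟨i.1, h⟩ else u ⟨i.1, h⟩) = μ (x i)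
      rw [dif_pos i.2]
    · refine Finset.prod_congr rfl fun k _ => ?_
      show μ (if h : k.1 ∈ J then x ⟨k.1, h⟩ else u ⟨k.1, h⟩) = μ (u k)
      rw [dif_neg k.2]
  calc (∏ i, μ (x i)) * G x
      = (∑ u : {k : Fin n // k ∉ J} → Alph, ∏ k, μ (u k)) * ((∏ i, μ (x i)) * G x) := by
        rw [sum_prod_one hsum1, one_mul]
    _ = ∑ u : {k : Fin n // k ∉ J} → Alph,
          pw μ ((splitJ J).symm (x, u)) * G (fun i => ((splitJ J).symm (x, u)) i.1) := by
        rw [Finset.sum_mul]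
        refine Finset.sum_congr rfl fun u _ => ?_
        rw [hx u, hpw u]
        ring

/-- construction of the bad set of coordinates -/
theorem exists_bad_set {n : ℕ} (μ : Alph → ℝ) (hnn : ∀ a, 0 ≤ μ a) (hsum1 : ∑ a, μ a = 1)
    [Nonempty Alph] {ρ τ ε : ℝ} (hρ0 : 0 < ρ) (hτ : 0 < τ) (hε : 0 < ε)
    (f : (Fin n → Alph) → ℝ) (J : Finset (Fin n))
    (hfail : ∑ z : Fin n → Alph,
        pw μ z * (if IsNoisyRegular μ ρ τ (hres f J z) then (1:ℝ) else 0) < 1 - ε) :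
    ∃ B : Finset (Fin n), (∀ i ∈ B, i ∉ J) ∧ B.card ≤ Fintype.card Alph ^ J.card ∧
      ε * τ ≤ ∑ i ∈ B, InfE μ ρ f J i := by
  classical
  set ext : (↥J → Alph) → (Fin n → Alph) :=
    fun p k => if h : k ∈ J then p ⟨k, h⟩ else Classical.arbitrary Alph with hext_def
  have key : ∀ p : ↥J → Alph, ¬ IsNoisyRegular μ ρ τ (hres f J (ext p)) →
      ∃ i, i ∉ J ∧ τ < noisyInf μ ρ (hres f J (ext p)) i := by
    intro p hq
    obtain ⟨i, hi⟩ := not_forall.mp hq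
    refine ⟨i, ?_, not_le.mp hi⟩
    intro hmem
    exact hi (by
      rw [noisyInf_hres_mem μ hsum1 ρ f hmem (ext p)]
      exact le_of_lt hτ)
  set wit : (↥J → Alph) → Finset (Fin n) :=
    fun p => if h : ∃ i, i ∉ J ∧ τ < noisyInf μ ρ (hres f J (ext p)) i
      then {h.choose} else ∅ with hwit_def
  set P : Finset (↥J → Alph) :=
    Finset.univ.filter (fun p => ¬ IsNoisyRegular μ ρ τ (hres f J (ext p))) with hP_def
  refine ⟨P.biUnion wit, ?_, ?_, ?_⟩
  · intro i hi
    obtain ⟨p, hp, hip⟩ := Finset.mem_biUnion.mp hi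
    by_cases h : ∃ i, i ∉ J ∧ τ < noisyInf μ ρ (hres f J (ext p)) i
    · rw [hwit_def] at hip
      simp only [dif_pos h] at hip
      rw [Finset.mem_singleton.mp hip]
      exact h.choose_spec.1
    · rw [hwit_def] at hip
      simp only [dif_neg h] at hip
      exact absurd hip (Finset.notMem_empty i)
  · calc (P.biUnion wit).card ≤ ∑ p ∈ P, (wit p).card := Finset.card_biUnion_le
      _ ≤ ∑ _p ∈ P, 1 := by
          refine Finset.sum_le_sum fun p _ => ?_
          rw [hwit_def]
          by_cases h : ∃ i, i ∉ J ∧ τ < noisyInf μ ρ (hres f J (ext p)) i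
          · simp [dif_pos h]
          · simp [dif_neg h]
      _ = P.card := by rw [Finset.sum_const, smul_eq_mul, mul_one]
      _ ≤ Fintype.card (↥J → Alph) := by
          rw [← Finset.card_univ]
          exact Finset.card_filter_le _ _
      _ = Fintype.card Alph ^ J.card := by
          rw [Fintype.card_fun, Fintype.card_coe]
  · have step1 : ∑ i ∈ P.biUnion wit, InfE μ ρ f J i
        = ∑ z : Fin n → Alph, pw μ z *
            ∑ i ∈ P.biUnion wit, noisyInf μ ρ (hres f J z) i := by
      unfold InfE
      rw [Finset.sum_comm]
      refine Finset.sum_congr rfl fun z _ => ?_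
      rw [Finset.mul_sum]
    have step2 : ∀ z : Fin n → Alph,
        τ * (1 - (if IsNoisyRegular μ ρ τ (hres f J z) then (1:ℝ) else 0))
          ≤ ∑ i ∈ P.biUnion wit, noisyInf μ ρ (hres f J z) i := by
      intro z
      by_cases hreg : IsNoisyRegular μ ρ τ (hres f J z)
      · rw [if_pos hreg]
        simp only [sub_self, mul_zero]
        exact Finset.sum_nonneg fun i _ => noisyInf_nonneg hnn (le_of_lt hρ0) _ i
      · rw [if_neg hreg]
        simp only [sub_zero, mul_one]
        set p : ↥J → Alph := fun i => z i.1 with hp_def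
        have hez : hres f J (ext p) = hres f J z := by
          refine hres_congr f fun k hk => ?_
          show (if h : k ∈ J then p ⟨k, h⟩ else Classical.arbitrary Alph) = z k
          rw [dif_pos hk]
        have hQp : ¬ IsNoisyRegular μ ρ τ (hres f J (ext p)) := by
          rw [hez]; exact hreg
        have hpP : p ∈ P := by
          rw [hP_def]
          simp only [Finset.mem_filter, Finset.mem_univ, true_and]
          exact hQp
        have hex := key p hQp
        have hwB : hex.choose ∈ P.biUnion wit := by
          refine Finset.mem_biUnion.mpr ⟨p, hpP, ?_⟩
          rw [hwit_def]
          simp only [dif_pos hex]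
          exact Finset.mem_singleton_self _
        have hlt : τ < noisyInf μ ρ (hres f J z) hex.choose := by
          rw [← hez]
          exact hex.choose_spec.2
        calc τ ≤ noisyInf μ ρ (hres f J z) hex.choose := le_of_lt hlt
          _ ≤ ∑ i ∈ P.biUnion wit, noisyInf μ ρ (hres f J z) i :=
              Finset.single_le_sum
                (fun i _ => noisyInf_nonneg hnn (le_of_lt hρ0) _ i) hwB
    have step3 : ∑ z : Fin n → Alph, pw μ z *
          (τ * (1 - (if IsNoisyRegular μ ρ τ (hres f J z) then (1:ℝ) else 0)))
        ≤ ∑ i ∈ P.biUnion wit, InfE μ ρ f J i := by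
      rw [step1]
      exact Finset.sum_le_sum fun z _ =>
        mul_le_mul_of_nonneg_left (step2 z) (pw_nonneg hnn z)
    have step4 : ∑ z : Fin n → Alph, pw μ z *
          (τ * (1 - (if IsNoisyRegular μ ρ τ (hres f J z) then (1:ℝ) else 0)))
        = τ * (1 - ∑ z : Fin n → Alph,
            pw μ z * (if IsNoisyRegular μ ρ τ (hres f J z) then (1:ℝ) else 0)) := by
      have expand : ∀ z : Fin n → Alph, pw μ z *
            (τ * (1 - (if IsNoisyRegular μ ρ τ (hres f J z) then (1:ℝ) else 0)))
          = τ * pw μ z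
            - τ * (pw μ z * (if IsNoisyRegular μ ρ τ (hres f J z) then (1:ℝ) else 0)) := by
        intro z
        ring
      rw [Finset.sum_congr rfl fun z _ => expand z, Finset.sum_sub_distrib,
        ← Finset.mul_sum, ← Finset.mul_sum, sum_pw hsum1]
      ring
    have hfin : ε * τ ≤ τ * (1 - ∑ z : Fin n → Alph,
        pw μ z * (if IsNoisyRegular μ ρ τ (hres f J z) then (1:ℝ) else 0)) := by
      nlinarith
    calc ε * τ ≤ _ := hfin
      _ = _ := step4.symm
      _ ≤ _ := step3

end JonesAux
open JonesAux in
/-- **Jones' regularity lemma for noisy influences** (junta version, arbitrary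
alphabets, `[0,1]`-valued functions). -/
theorem jones_regularity_lemma_noisy
    (Alph : Type*) [Fintype Alph] [DecidableEq Alph] (hcard : 2 ≤ Fintype.card Alph)
    (m : ℕ) (μ : Fin m → Alph → ℝ)
    (hpos : ∀ j a, 0 < μ j a) (hsum : ∀ j, ∑ a, μ j a = 1)
    (ρ : ℝ) (hρ0 : 0 < ρ) (hρ1 : ρ < 1)
    (ε τ : ℝ) (hε : 0 < ε) (hτ : 0 < τ) :
    ∃ 𝓜 : ℕ → ℕ, ∀ (n : ℕ) (f : Fin m → (Fin n → Alph) → ℝ),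
      (∀ j x, 0 ≤ f j x ∧ f j x ≤ 1) →
      ∀ J₀ : Finset (Fin n), ∃ J : Finset (Fin n), J₀ ⊆ J ∧ J.card ≤ 𝓜 J₀.card ∧
        ∀ j, 1 - ε ≤ ∑ x : ↥J → Alph, (∏ i, μ j (x i)) *
          (if IsNoisyRegular (μ j) ρ τ (fun y => f j (mergeJ J x y)) then 1 else 0) := by
  classical
  haveI : Nonempty Alph := Fintype.card_pos_iff.mp (by omega)
  have hnn : ∀ j a, 0 ≤ μ j a := fun j a => le_of_lt (hpos j a)
  have hρinv : (1:ℝ) < ρ⁻¹ := (one_lt_inv₀ hρ0).mpr hρ1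
  set δ : ℝ := (ρ⁻¹ - 1) * (ε * τ) with hδ_def
  have hδpos : 0 < δ := mul_pos (by linarith) (mul_pos hε hτ)
  set N : ℕ := ⌈(m : ℝ) / δ⌉₊ + 1 with hN_def
  set g : ℕ → ℕ := fun s => s + Fintype.card Alph ^ s with hg_def
  have hg_le : ∀ s, s ≤ g s := fun s => Nat.le_add_right _ _
  have hg_mono : Monotone g := by
    intro s t hst
    have h1 : Fintype.card Alph ^ s ≤ Fintype.card Alph ^ t :=
      Nat.pow_le_pow_right (by omega) hst
    simp only [hg_def]
    omega
  have hgk_mono : ∀ k, Monotone (g^[k]) := fun k => hg_mono.iterate k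
  have hle_iter : ∀ (k : ℕ) (s : ℕ), s ≤ g^[k] s := by
    intro k
    induction k with
    | zero => intro s; simp
    | succ k ih =>
        intro s
        rw [Function.iterate_succ_apply]
        exact le_trans (hg_le s) (ih (g s))
  refine ⟨fun s => g^[N] s, ?_⟩
  intro n f hf J₀
  have hbridge : ∀ (J : Finset (Fin n)) (j : Fin m),
      (∑ x : ↥J → Alph, (∏ i, μ j (x i)) *
          (if IsNoisyRegular (μ j) ρ τ (fun y => f j (mergeJ J x y)) then (1:ℝ) else 0))
      = ∑ z : Fin n → Alph, pw (μ j) z *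
          (if IsNoisyRegular (μ j) ρ τ (hres (f j) J z) then (1:ℝ) else 0) := by
    intro J j
    rw [sum_subtype_pw (μ j) (hsum j) J
      (fun x => if IsNoisyRegular (μ j) ρ τ (fun y => f j (mergeJ J x y)) then (1:ℝ) else 0)]
    refine Finset.sum_congr rfl fun z _ => ?_
    show pw (μ j) z * (if IsNoisyRegular (μ j) ρ τ
        (fun y => f j (mergeJ J (fun i : ↥J => z i.1) y)) then (1:ℝ) else 0)
      = pw (μ j) z * (if IsNoisyRegular (μ j) ρ τ (hres (f j) J z) then (1:ℝ) else 0)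
    have hfun : (fun y => f j (mergeJ J (fun i : ↥J => z i.1) y)) = hres (f j) J z := by
      funext y
      refine congrArg (f j) ?_
      funext k
      show (if h : k ∈ J then z k else y k) = (if k ∈ J then z k else y k)
      by_cases h : k ∈ J
      · rw [dif_pos h, if_pos h]
      · rw [dif_neg h, if_neg h]
    have hiff : IsNoisyRegular (μ j) ρ τ (fun y => f j (mergeJ J (fun i : ↥J => z i.1) y))
        ↔ IsNoisyRegular (μ j) ρ τ (hres (f j) J z) := by rw [hfun]
    by_cases hr : IsNoisyRegular (μ j) ρ τ (hres (f j) J z)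
    · rw [if_pos (hiff.mpr hr), if_pos hr]
    · rw [if_neg (fun hc => hr (hiff.mp hc)), if_neg hr]
  set Θ : Finset (Fin n) → ℝ := fun J => ∑ j, Phi (μ j) ρ (f j) J with hΘ_def
  have hΘ_le : ∀ J, Θ J ≤ m := by
    intro J
    calc Θ J ≤ ∑ _j : Fin m, (1:ℝ) :=
          Finset.sum_le_sum fun j _ => Phi_le_one (hnn j) (hsum j) (le_of_lt hρ0)
            (le_of_lt hρ1) (f j) (fun x => hf j x) J
      _ = m := by simp
  have hΘ_nonneg : ∀ J, 0 ≤ Θ J := fun J =>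
    Finset.sum_nonneg fun j _ => Phi_nonneg (hnn j) (le_of_lt hρ0) (f j) J
  have main : ∀ (k : ℕ) (J : Finset (Fin n)), J₀ ⊆ J → (m : ℝ) < Θ J + k * δ →
      ∃ J', J₀ ⊆ J' ∧ J'.card ≤ g^[k] J.card ∧
        ∀ j, 1 - ε ≤ ∑ x : ↥J' → Alph, (∏ i, μ j (x i)) *
          (if IsNoisyRegular (μ j) ρ τ (fun y => f j (mergeJ J' x y)) then (1:ℝ) else 0) := by
    intro k
    induction k with
    | zero =>
        intro J hJ hm
        exfalso
        have h1 := hΘ_le J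
        have hm0 : (m:ℝ) < Θ J := by
          push_cast at hm
          simpa using hm
        linarith
    | succ k ih =>
        intro J hJ0 hm
        by_cases hS : ∀ j, 1 - ε ≤ ∑ x : ↥J → Alph, (∏ i, μ j (x i)) *
            (if IsNoisyRegular (μ j) ρ τ (fun y => f j (mergeJ J x y)) then (1:ℝ) else 0)
        · exact ⟨J, hJ0, hle_iter (k+1) J.card, hS⟩
        · push_neg at hS
          obtain ⟨j₀, hj₀⟩ := hS
          have hfail : ∑ z : Fin n → Alph, pw (μ j₀) z *
              (if IsNoisyRegular (μ j₀) ρ τ (hres (f j₀) J z) then (1:ℝ) else 0) < 1 - ε := by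
            rw [← hbridge J j₀]
            exact hj₀
          obtain ⟨B, hBJ, hBcard, hBgain⟩ :=
            exists_bad_set (μ j₀) (hnn j₀) (hsum j₀) hρ0 hτ hε (f j₀) J hfail
          have hj₀gain : Phi (μ j₀) ρ (f j₀) J + δ ≤ Phi (μ j₀) ρ (f j₀) (J ∪ B) := by
            have h1 := Phi_union_gain (μ j₀) (hnn j₀) (hsum j₀) hρ0 (le_of_lt hρ1)
              (f j₀) J B hBJ
            have h2 : δ ≤ (ρ⁻¹ - 1) * ∑ i ∈ B, InfE (μ j₀) ρ (f j₀) J i := by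
              rw [hδ_def]
              exact mul_le_mul_of_nonneg_left hBgain (by linarith)
            linarith
          have hother : ∀ j : Fin m, Phi (μ j) ρ (f j) J ≤ Phi (μ j) ρ (f j) (J ∪ B) :=
            fun j => Phi_mono (μ j) (hnn j) (hsum j) hρ0 (le_of_lt hρ1) (f j)
              Finset.subset_union_left
          have hΘstep : Θ J + δ ≤ Θ (J ∪ B) := by
            have hs := Finset.single_le_sum
              (f := fun j : Fin m => Phi (μ j) ρ (f j) (J ∪ B) - Phi (μ j) ρ (f j) J)
              (fun j _ => sub_nonneg.mpr (hother j)) (Finset.mem_univ j₀)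
            have hsd : ∑ j : Fin m, (Phi (μ j) ρ (f j) (J ∪ B) - Phi (μ j) ρ (f j) J)
                = Θ (J ∪ B) - Θ J := by
              rw [Finset.sum_sub_distrib]
            rw [hsd] at hs
            have hs' : Phi (μ j₀) ρ (f j₀) (J ∪ B) - Phi (μ j₀) ρ (f j₀) J
                ≤ Θ (J ∪ B) - Θ J := hs
            linarith
          have hm' : (m:ℝ) < Θ (J ∪ B) + k * δ := by
            push_cast at hm ⊢
            linarith
          obtain ⟨J', h1, h2, h3⟩ := ih (J ∪ B) (hJ0.trans Finset.subset_union_left) hm'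
          refine ⟨J', h1, ?_, h3⟩
          calc J'.card ≤ g^[k] (J ∪ B).card := h2
            _ ≤ g^[k] (g J.card) := by
                refine hgk_mono k ?_
                calc (J ∪ B).card ≤ J.card + B.card := Finset.card_union_le _ _
                  _ ≤ J.card + Fintype.card Alph ^ J.card := by omega
                  _ = g J.card := rfl
            _ = g^[k+1] J.card := (Function.iterate_succ_apply g k J.card).symm
  have hNδ : (m:ℝ) < N * δ := by
    have h1 : (m:ℝ)/δ < N := by
      have h2 := Nat.le_ceil ((m:ℝ)/δ)
      have h3 : (⌈(m:ℝ)/δ⌉₊ : ℝ) < N := by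
        rw [hN_def]
        push_cast
        linarith
      linarith
    calc (m:ℝ) = ((m:ℝ)/δ)*δ := by field_simp
      _ < N * δ := mul_lt_mul_of_pos_right h1 hδpos
  obtain ⟨J', h1, h2, h3⟩ := main N J₀ (Finset.Subset.refl _)
    (by have := hΘ_nonneg J₀; linarith)
  exact ⟨J', h1, h2, h3⟩
end
end
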